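/- arXiv:2511.06574 — 6 statements merged into one kernel-verified Lean document; each statement's English description precedes it below -/
import Mathlib

section
/- Let G = (V,E) be a finite simple undirected graph, let T be a hierarchical-decomposition tree of G given by a laminar family 𝓕, and let α ≥ 1. Suppose that for every demand matrix R : V×V → ℝ≥0 the following implication holds: if for every subset U ⊆ 𝓕 with U and 𝓕∖U nonempty one has cap_T(U, 𝓕∖U) ≥ Σ_{u,v∈V with {u}∈U and {v}∉U} (R(u,v) + R(v,u)) (i.e., T 1-respects R), then for every cut (S, V∖S) of G one has cap_G(S, V∖S) ≥ (1/α)·dem_R(S, V∖S) (i.e., G (1/α)-respects R). Then T is a cut-sparsifier of G of quality α, i.e., for every nonempty proper S ⊆ V, cap_G(S, V∖S) ≤ mincut_T(S, V∖S) ≤ α·cap_G(S, V∖S). -/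
open Finset
set_option linter.unusedSectionVars false

open Classical in
noncomputable def capG {V : Type} [Fintype V] (G : SimpleGraph V) (A B : Finset V) : ℝ :=
  ∑ u ∈ A, ∑ v ∈ B, if G.Adj u v then (1 : ℝ) else 0

open Classical in
noncomputable def capT {V : Type} [Fintype V] [DecidableEq V] (G : SimpleGraph V)
    (F : Finset (Finset V)) (Pa : Finset V → Finset V) (U : Finset (Finset V)) : ℝ :=
  ∑ S ∈ F.filter (fun S => S ≠ Finset.univ),
    if (S ∈ U) ↔ (Pa S ∈ U) then 0 else capG G S Sᶜ

open Classical in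
noncomputable def mincutT {V : Type} [Fintype V] [DecidableEq V] (G : SimpleGraph V)
    (F : Finset (Finset V)) (Pa : Finset V → Finset V) (S : Finset V) : ℝ :=
  sInf {x : ℝ | ∃ U : Finset (Finset V), U ⊆ F ∧
    (∀ v ∈ S, ({v} : Finset V) ∈ U) ∧ (∀ v ∉ S, ({v} : Finset V) ∉ U) ∧
    x = capT G F Pa U}

namespace CutSparsifierAux

variable {V : Type} [Fintype V] [DecidableEq V]

open Classical in
/-- number of edges of `G` from `A` to `Aᶜ`, as a natural number. -/
noncomputable def cN (G : SimpleGraph V) (A : Finset V) : ℕ :=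
  ∑ u ∈ A, ∑ v ∈ Aᶜ, if G.Adj u v then 1 else 0

/-- elementary unit flow from `u` to `v` measured across the edge `(A, Pa A)`. -/
def dP (u v : V) (A : Finset V) : ℤ :=
  (if u ∈ A ∧ v ∉ A then 1 else 0) - (if v ∈ A ∧ u ∉ A then 1 else 0)

/-- the children of `B` in the tree. -/
def ch (F : Finset (Finset V)) (Pa : Finset V → Finset V) (B : Finset V) :
    Finset (Finset V) :=
  F.filter (fun A => A ≠ Finset.univ ∧ Pa A = B)

/-- conservation of a flow `g` on the tree. -/
def Consv (F : Finset (Finset V)) (Pa : Finset V → Finset V) (g : Finset V → ℤ) : Prop :=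
  g Finset.univ = 0 ∧
    ∀ B ∈ F, (∀ x : V, B ≠ {x}) → ∑ A ∈ ch F Pa B, g A = g B

variable {G : SimpleGraph V} {F : Finset (Finset V)} {Pa : Finset V → Finset V}

section basic

lemma chain_of_mem (hlam : ∀ A ∈ F, ∀ B ∈ F, A ⊆ B ∨ B ⊆ A ∨ Disjoint A B)
    {A B : Finset V} {x : V} (hA : A ∈ F) (hB : B ∈ F) (hxA : x ∈ A) (hxB : x ∈ B) :
    A ⊆ B ∨ B ⊆ A := by
  rcases hlam A hA B hB with h | h | h
  · exact Or.inl h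
  · exact Or.inr h
  · exact absurd (h.forall_ne_finset hxA hxB) (by simp)

variable (hne : ∀ A ∈ F, A.Nonempty)
  (hlam : ∀ A ∈ F, ∀ B ∈ F, A ⊆ B ∨ B ⊆ A ∨ Disjoint A B)
  (huniv : Finset.univ ∈ F)
  (hsing : ∀ v : V, ({v} : Finset V) ∈ F)
  (hPa : ∀ S ∈ F, S ≠ Finset.univ →
      Pa S ∈ F ∧ S ⊂ Pa S ∧ ∀ R ∈ F, S ⊂ R → Pa S ⊆ R)

include hPa

lemma mem_ch {A B : Finset V} (h : A ∈ ch F Pa B) :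
    A ∈ F ∧ A ≠ Finset.univ ∧ Pa A = B ∧ A ⊂ B := by
  simp only [ch, mem_filter] at h
  obtain ⟨h1, h2, h3⟩ := h
  exact ⟨h1, h2, h3, h3 ▸ (hPa A h1 h2).2.1⟩

include hne in
lemma ch_singleton (x : V) : ch F Pa ({x} : Finset V) = ∅ := by
  rw [eq_empty_iff_forall_notMem]
  intro A hA
  obtain ⟨hAF, _, _, hss⟩ := mem_ch hPa hA
  rcases hne A hAF with ⟨y, hy⟩
  have := hss.subset hy
  simp only [mem_singleton] at this
  subst this
  exact hss.not_subset (by simpa using hy)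

include hlam hsing in
lemma exists_child {B : Finset V} {x : V} (hB : B ∈ F) (hxB : x ∈ B)
    (hBs : ∀ y : V, B ≠ {y}) : ∃ A ∈ ch F Pa B, x ∈ A := by
  classical
  set C := F.filter (fun A => x ∈ A ∧ A ⊂ B) with hC
  have hCne : C.Nonempty := by
    refine ⟨{x}, ?_⟩
    simp only [hC, mem_filter]
    refine ⟨hsing x, by simp, ?_⟩
    exact lt_of_le_of_ne (by simpa using hxB) (fun h => (hBs x) h.symm)
  obtain ⟨A, hA, hmax⟩ := C.exists_max_image Finset.card hCne
  simp only [hC, mem_filter] at hA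
  obtain ⟨hAF, hxA, hAB⟩ := hA
  have hAne : A ≠ Finset.univ := by
    intro h; subst h
    exact absurd (subset_univ B) hAB.not_subset
  obtain ⟨hPaF, hPass, hPamin⟩ := hPa A hAF hAne
  have hPaB : Pa A ⊆ B := hPamin B hB hAB
  have : Pa A = B := by
    by_contra h
    have hPaC : Pa A ∈ C := by
      simp only [hC, mem_filter]
      exact ⟨hPaF, hPass.subset hxA, lt_of_le_of_ne hPaB h⟩
    have := hmax _ hPaC
    exact absurd (Finset.card_lt_card hPass) (not_lt.2 this)
  exact ⟨A, by simp only [ch, mem_filter]; exact ⟨hAF, hAne, this⟩, hxA⟩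

include hlam in
lemma child_unique {B A A' : Finset V} {x : V} (hA : A ∈ ch F Pa B) (hA' : A' ∈ ch F Pa B)
    (hx : x ∈ A) (hx' : x ∈ A') : A = A' := by
  obtain ⟨hAF, hAne, hAPa, hAB⟩ := mem_ch hPa hA
  obtain ⟨hAF', hAne', hAPa', hAB'⟩ := mem_ch hPa hA'
  rcases chain_of_mem hlam hAF hAF' hx hx' with h | h
  · rcases eq_or_ssubset_of_subset h with h1 | h1
    · exact h1
    · have := (hPa A hAF hAne).2.2 A' hAF' h1
      rw [hAPa] at this
      exact absurd this hAB'.not_subset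
  · rcases eq_or_ssubset_of_subset h with h1 | h1
    · exact h1.symm
    · have := (hPa A' hAF' hAne').2.2 A hAF h1
      rw [hAPa'] at this
      exact absurd this hAB.not_subset

end basic

section consv

variable (hne : ∀ A ∈ F, A.Nonempty)
  (hlam : ∀ A ∈ F, ∀ B ∈ F, A ⊆ B ∨ B ⊆ A ∨ Disjoint A B)
  (huniv : Finset.univ ∈ F)
  (hsing : ∀ v : V, ({v} : Finset V) ∈ F)
  (hPa : ∀ S ∈ F, S ≠ Finset.univ →
      Pa S ∈ F ∧ S ⊂ Pa S ∧ ∀ R ∈ F, S ⊂ R → Pa S ⊆ R)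

lemma consv_zero : Consv F Pa (fun _ => (0 : ℤ)) := ⟨rfl, fun _ _ _ => by simp⟩

lemma consv_add {g h : Finset V → ℤ} (hg : Consv F Pa g) (hh : Consv F Pa h) :
    Consv F Pa (fun A => g A + h A) := by
  refine ⟨by show g _ + h _ = 0; rw [hg.1, hh.1]; ring, fun B hB hBs => ?_⟩
  rw [Finset.sum_add_distrib, hg.2 B hB hBs, hh.2 B hB hBs]

lemma consv_sub {g h : Finset V → ℤ} (hg : Consv F Pa g) (hh : Consv F Pa h) :
    Consv F Pa (fun A => g A - h A) := by
  refine ⟨by show g _ - h _ = 0; rw [hg.1, hh.1]; ring, fun B hB hBs => ?_⟩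
  rw [Finset.sum_sub_distrib, hg.2 B hB hBs, hh.2 B hB hBs]

lemma consv_sum {ι : Type*} (s : Finset ι) (f : ι → Finset V → ℤ)
    (h : ∀ i ∈ s, Consv F Pa (f i)) : Consv F Pa (fun A => ∑ i ∈ s, f i A) := by
  classical
  induction s using Finset.induction_on with
  | empty => simpa using consv_zero
  | @insert a s' hx ih =>
    have h1 : Consv F Pa (f a) := h a (mem_insert_self a s')
    have h2 : Consv F Pa (fun A => ∑ i ∈ s', f i A) :=
      ih (fun i hi => h i (mem_insert_of_mem hi))
    have := consv_add h1 h2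
    simpa [Finset.sum_insert hx] using this

include hne hlam hsing hPa in
lemma consv_dP (u v : V) : Consv F Pa (dP u v) := by
  constructor
  · simp [dP]
  · intro B hB hBs
    have hsubB : ∀ A ∈ ch F Pa B, A ⊆ B := fun A hA => (mem_ch hPa hA).2.2.2.subset
    by_cases hu : u ∈ B <;> by_cases hv : v ∈ B
    · -- both in B
      obtain ⟨Cu, hCu, hCuu⟩ := exists_child hlam hsing hPa hB hu hBs
      obtain ⟨Cv, hCv, hCvv⟩ := exists_child hlam hsing hPa hB hv hBs
      have hkey : ∀ A ∈ ch F Pa B,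
          dP u v A = (if A = Cu then 1 else 0) - (if A = Cv then 1 else 0) := by
        intro A hA
        by_cases h1 : A = Cu <;> by_cases h2 : A = Cv
        · subst h1; subst h2; simp [dP, hCuu, hCvv]
        · subst h1
          have hvA : v ∉ A := fun hvA => h2 (child_unique hlam hPa hA hCv hvA hCvv)
          simp [dP, hCuu, hvA, h2]
        · subst h2
          have huA : u ∉ A := fun huA => h1 (child_unique hlam hPa hA hCu huA hCuu)
          simp [dP, hCvv, huA, h1]
        · have hvA : v ∉ A := fun hvA => h2 (child_unique hlam hPa hA hCv hvA hCvv)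
          have huA : u ∉ A := fun huA => h1 (child_unique hlam hPa hA hCu huA hCuu)
          simp [dP, huA, hvA, h1, h2]
      rw [Finset.sum_congr rfl hkey, Finset.sum_sub_distrib,
        Finset.sum_ite_eq' _ Cu (fun _ => (1:ℤ)), Finset.sum_ite_eq' _ Cv (fun _ => (1:ℤ))]
      simp [dP, hu, hv, hCu, hCv]
    · -- u ∈ B, v ∉ B
      obtain ⟨Cu, hCu, hCuu⟩ := exists_child hlam hsing hPa hB hu hBs
      have hkey : ∀ A ∈ ch F Pa B, dP u v A = (if A = Cu then 1 else 0) := by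
        intro A hA
        have hvA : v ∉ A := fun hvA => hv (hsubB A hA hvA)
        by_cases h1 : A = Cu
        · subst h1; simp [dP, hCuu, hvA]
        · have huA : u ∉ A := fun huA => h1 (child_unique hlam hPa hA hCu huA hCuu)
          simp [dP, huA, hvA, h1]
      rw [Finset.sum_congr rfl hkey, Finset.sum_ite_eq' _ Cu (fun _ => (1:ℤ))]
      simp [dP, hu, hv, hCu]
    · -- v ∈ B, u ∉ B
      obtain ⟨Cv, hCv, hCvv⟩ := exists_child hlam hsing hPa hB hv hBs
      have hkey : ∀ A ∈ ch F Pa B, dP u v A = -(if A = Cv then 1 else 0) := by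
        intro A hA
        have huA : u ∉ A := fun huA => hu (hsubB A hA huA)
        by_cases h1 : A = Cv
        · subst h1; simp [dP, hCvv, huA]
        · have hvA : v ∉ A := fun hvA => h1 (child_unique hlam hPa hA hCv hvA hCvv)
          simp [dP, huA, hvA, h1]
      rw [Finset.sum_congr rfl hkey, Finset.sum_neg_distrib,
        Finset.sum_ite_eq' _ Cv (fun _ => (1:ℤ))]
      simp [dP, hu, hv, hCv]
    · -- neither
      have hkey : ∀ A ∈ ch F Pa B, dP u v A = 0 := by
        intro A hA
        have huA : u ∉ A := fun huA => hu (hsubB A hA huA)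
        have hvA : v ∉ A := fun hvA => hv (hsubB A hA hvA)
        simp [dP, huA, hvA]
      rw [Finset.sum_congr rfl hkey]
      simp [dP, hu, hv]

end consv

section core

variable (hne : ∀ A ∈ F, A.Nonempty)
  (hPa : ∀ S ∈ F, S ≠ Finset.univ →
      Pa S ∈ F ∧ S ⊂ Pa S ∧ ∀ R ∈ F, S ⊂ R → Pa S ⊆ R)

open Classical in
include hne hPa in
/-- The flow-cut identity. -/
lemma core {g : Finset V → ℤ} (hg : Consv F Pa g) {U : Finset (Finset V)} (hU : U ⊆ F) :
    ∑ w : V, (if ({w} : Finset V) ∈ U then g {w} else 0)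
      = ∑ A ∈ F.filter (fun A => A ≠ Finset.univ),
          (if (A ∈ U) ↔ (Pa A ∈ U) then 0 else if A ∈ U then g A else - g A) := by
  classical
  set F' := F.filter (fun A => A ≠ Finset.univ) with hF'
  have step1 : ∑ A ∈ F', (if (A ∈ U) ↔ (Pa A ∈ U) then 0 else if A ∈ U then g A else - g A)
      = (∑ A ∈ F', if A ∈ U then g A else 0) - (∑ A ∈ F', if Pa A ∈ U then g A else 0) := by
    rw [← Finset.sum_sub_distrib]
    refine Finset.sum_congr rfl fun A _ => ?_
    by_cases h1 : A ∈ U <;> by_cases h2 : Pa A ∈ U <;> simp [h1, h2]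
  have step2 : (∑ A ∈ F', if A ∈ U then g A else 0) = ∑ B ∈ U, g B := by
    rw [← Finset.sum_filter]
    have hset : F'.filter (fun A => A ∈ U) = U.filter (fun A => A ≠ Finset.univ) := by
      ext A
      simp only [hF', mem_filter, and_assoc]
      constructor
      · rintro ⟨_, h2, h3⟩; exact ⟨h3, h2⟩
      · rintro ⟨h1, h2⟩; exact ⟨hU h1, h2, h1⟩
    rw [hset]
    rw [← Finset.sum_filter_add_sum_filter_not U (fun A => A ≠ Finset.univ) g]
    have : (U.filter (fun A => ¬ A ≠ Finset.univ)) = U.filter (fun A => A = Finset.univ) := by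
      simp only [not_not]
    rw [this]
    have : ∑ A ∈ U.filter (fun A => A = Finset.univ), g A = 0 := by
      refine Finset.sum_eq_zero fun A hA => ?_
      simp only [mem_filter] at hA
      rw [hA.2, hg.1]
    rw [this, add_zero]
  have step3 : (∑ A ∈ F', if Pa A ∈ U then g A else 0)
      = ∑ B ∈ U, ∑ A ∈ ch F Pa B, g A := by
    rw [← Finset.sum_filter]
    have hmaps : ∀ A ∈ F'.filter (fun A => Pa A ∈ U), Pa A ∈ U := fun A hA =>
      (mem_filter.1 hA).2
    rw [← Finset.sum_fiberwise_of_maps_to hmaps g]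
    refine Finset.sum_congr rfl fun B hB => ?_
    refine Finset.sum_congr ?_ fun _ _ => rfl
    ext A
    simp only [hF', ch, mem_filter, and_assoc]
    constructor
    · rintro ⟨h1, h2, _, h4⟩; exact ⟨h1, h2, h4⟩
    · rintro ⟨h1, h2, h3⟩; exact ⟨h1, h2, h3 ▸ hB, h3⟩
  have step4 : ∑ B ∈ U, g B - (∑ B ∈ U, ∑ A ∈ ch F Pa B, g A)
      = ∑ B ∈ U, (if B.card = 1 then g B else 0) := by
    rw [← Finset.sum_sub_distrib]
    refine Finset.sum_congr rfl fun B hB => ?_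
    by_cases hcard : B.card = 1
    · obtain ⟨x, hx⟩ := Finset.card_eq_one.1 hcard
      subst hx
      rw [ch_singleton hne hPa]
      simp [hcard]
    · have hBs : ∀ x : V, B ≠ {x} := by
        intro x h; exact hcard (h ▸ Finset.card_singleton x)
      by_cases hBuniv : B = Finset.univ
      · subst hBuniv
        rw [hg.2 _ (hU hB) hBs, hg.1]
        simp [hcard, hg.1]
        exact (ite_self (0:ℤ)).symm
      · rw [hg.2 _ (hU hB) hBs]
        simp [hcard]
  have step5 : ∑ B ∈ U, (if B.card = 1 then g B else 0)
      = ∑ w : V, (if ({w} : Finset V) ∈ U then g {w} else 0) := by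
    rw [← Finset.sum_filter, ← Finset.sum_filter]
    refine (Finset.sum_bij
      (fun (w : V) (_ : w ∈ Finset.univ.filter fun w => ({w} : Finset V) ∈ U) =>
        ({w} : Finset V)) ?_ ?_ ?_ ?_).symm
    · intro w hw
      simp only [mem_filter] at hw ⊢
      exact ⟨hw.2, Finset.card_singleton w⟩
    · intro a _ b _ h
      exact Finset.singleton_injective h
    · intro B hB
      simp only [mem_filter] at hB
      obtain ⟨x, hx⟩ := Finset.card_eq_one.1 hB.2
      refine ⟨x, ?_, hx.symm⟩
      simp only [mem_filter, mem_univ, true_and]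
      exact hx ▸ hB.1
    · intro w _
      rfl
  rw [step1, step2, step3, step4, step5]

end core

section caps

lemma abs_dP (u v : V) (A : Finset V) :
    |dP u v A| = (if u ∈ A ∧ v ∉ A then (1:ℤ) else 0) + (if v ∈ A ∧ u ∉ A then 1 else 0) := by
  unfold dP
  by_cases h1 : u ∈ A <;> by_cases h2 : v ∈ A <;> simp [h1, h2]

open Classical in
lemma cN_int (G : SimpleGraph V) (A : Finset V) : (cN G A : ℤ) =
    ∑ u : V, ∑ v : V, (if u ∈ A ∧ v ∉ A ∧ G.Adj u v then (1:ℤ) else 0) := by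
  classical
  unfold cN
  push_cast
  have hAc : Aᶜ = Finset.univ.filter (fun v => v ∉ A) := by ext v; simp
  have inner : ∀ u : V, (∑ v : V, if u ∈ A ∧ v ∉ A ∧ G.Adj u v then (1:ℤ) else 0)
      = if u ∈ A then (∑ v ∈ Aᶜ, if G.Adj u v then (1:ℤ) else 0) else 0 := by
    intro u
    by_cases hu : u ∈ A
    · simp only [hu, true_and, if_true]
      rw [hAc, Finset.sum_filter]
      refine Finset.sum_congr rfl fun v _ => ?_
      by_cases hv : v ∈ A <;> simp [hv]
    · simp [hu]
  rw [show (∑ u : V, ∑ v : V, if u ∈ A ∧ v ∉ A ∧ G.Adj u v then (1:ℤ) else 0)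
      = ∑ u : V, if u ∈ A then (∑ v ∈ Aᶜ, if G.Adj u v then (1:ℤ) else 0) else 0 from
    Finset.sum_congr rfl fun u _ => inner u]
  rw [← Finset.sum_filter]
  have hA : Finset.univ.filter (fun u => u ∈ A) = A := by ext u; simp
  rw [hA]

open Classical in
lemma capG_compl_eq (G : SimpleGraph V) (A : Finset V) :
    capG G A Aᶜ = ((cN G A : ℤ) : ℝ) := by
  unfold capG cN
  push_cast
  refine Finset.sum_congr rfl fun u _ => Finset.sum_congr rfl fun v _ => ?_
  split_ifs <;> simp

open Classical in
lemma capG_nonneg (G : SimpleGraph V) (A B : Finset V) : 0 ≤ capG G A B := by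
  unfold capG
  refine Finset.sum_nonneg fun u _ => Finset.sum_nonneg fun v _ => ?_
  split_ifs <;> norm_num

open Classical in
lemma capT_nonneg (G : SimpleGraph V) (F : Finset (Finset V)) (Pa : Finset V → Finset V)
    (U : Finset (Finset V)) : 0 ≤ capT G F Pa U := by
  unfold capT
  refine Finset.sum_nonneg fun A _ => ?_
  split_ifs
  · exact le_refl 0
  · exact capG_nonneg G A Aᶜ

end caps

section gzero

open Classical

variable (G : SimpleGraph V) (S : Finset V)

/-- the flow induced by routing every edge of `G` crossing `(S, Sᶜ)` along the tree. -/
noncomputable def g0 : Finset V → ℤ := fun A =>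
  ∑ u : V, ∑ v : V, (if u ∈ S ∧ v ∉ S ∧ G.Adj u v then dP u v A else 0)

variable {G S}
variable (hne : ∀ A ∈ F, A.Nonempty)
  (hlam : ∀ A ∈ F, ∀ B ∈ F, A ⊆ B ∨ B ⊆ A ∨ Disjoint A B)
  (hsing : ∀ v : V, ({v} : Finset V) ∈ F)
  (hPa : ∀ S ∈ F, S ≠ Finset.univ →
      Pa S ∈ F ∧ S ⊂ Pa S ∧ ∀ R ∈ F, S ⊂ R → Pa S ⊆ R)

include hne hlam hsing hPa in
lemma consv_g0 : Consv F Pa (g0 G S) := by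
  refine consv_sum Finset.univ _ fun u _ => consv_sum Finset.univ _ fun v _ => ?_
  by_cases hc : u ∈ S ∧ v ∉ S ∧ G.Adj u v
  · simpa [hc] using consv_dP hne hlam hsing hPa u v
  · simpa [hc] using (consv_zero (F := F) (Pa := Pa))

lemma g0_bound (A : Finset V) : |g0 G S A| ≤ (cN G A : ℤ) := by
  classical
  have h1 : |g0 G S A| ≤ ∑ u : V, ∑ v : V,
      (if u ∈ S ∧ v ∉ S ∧ G.Adj u v then |dP u v A| else 0) := by
    refine le_trans (Finset.abs_sum_le_sum_abs _ _) ?_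
    refine Finset.sum_le_sum fun u _ => ?_
    refine le_trans (Finset.abs_sum_le_sum_abs _ _) ?_
    refine Finset.sum_le_sum fun v _ => ?_
    by_cases hc : u ∈ S ∧ v ∉ S ∧ G.Adj u v <;> simp [hc]
  rw [cN_int]
  refine le_trans h1 ?_
  have h2 : ∀ u v : V, (if u ∈ S ∧ v ∉ S ∧ G.Adj u v then |dP u v A| else 0)
      = (if u ∈ S ∧ v ∉ S ∧ G.Adj u v then (if u ∈ A ∧ v ∉ A then (1:ℤ) else 0) else 0)
        + (if u ∈ S ∧ v ∉ S ∧ G.Adj u v then (if v ∈ A ∧ u ∉ A then (1:ℤ) else 0) else 0) := by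
    intro u v
    by_cases hc : u ∈ S ∧ v ∉ S ∧ G.Adj u v <;> simp [hc, abs_dP]
  simp_rw [h2, Finset.sum_add_distrib]
  have h3 : (∑ u : V, ∑ v : V, (if u ∈ S ∧ v ∉ S ∧ G.Adj u v then
        (if v ∈ A ∧ u ∉ A then (1:ℤ) else 0) else 0))
      = ∑ u : V, ∑ v : V, (if v ∈ S ∧ u ∉ S ∧ G.Adj v u then
        (if u ∈ A ∧ v ∉ A then (1:ℤ) else 0) else 0) := by
    rw [Finset.sum_comm]
  rw [h3, ← Finset.sum_add_distrib]
  simp_rw [← Finset.sum_add_distrib]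
  refine Finset.sum_le_sum fun u _ => Finset.sum_le_sum fun v _ => ?_
  rcases Classical.em (G.Adj u v) with hadj | hadj
  · have hadj' : G.Adj v u := hadj.symm
    split_ifs <;> first | omega | tauto
  · have hadj' : ¬ G.Adj v u := fun h => hadj h.symm
    split_ifs <;> first | omega | tauto

lemma g0_val : ∑ w ∈ S, g0 G S {w} = (cN G S : ℤ) := by
  classical
  unfold g0
  rw [Finset.sum_comm]
  rw [cN_int]
  refine Finset.sum_congr rfl fun u _ => ?_
  rw [Finset.sum_comm]
  refine Finset.sum_congr rfl fun v _ => ?_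
  by_cases hc : u ∈ S ∧ v ∉ S ∧ G.Adj u v
  · have hdP : ∀ w ∈ S, (if u ∈ S ∧ v ∉ S ∧ G.Adj u v then dP u v {w} else 0)
        = if w = u then (1:ℤ) else 0 := by
      intro w hw
      rw [if_pos hc]
      have hvw : v ≠ w := fun h => hc.2.1 (h ▸ hw)
      unfold dP
      by_cases hwu : w = u
      · subst hwu
        simp [hvw]
      · have huw : u ≠ w := fun h => hwu h.symm
        simp [huw, hvw, hwu]
    rw [Finset.sum_congr rfl hdP, Finset.sum_ite_eq' S u (fun _ => (1:ℤ)),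
      if_pos hc.1, if_pos hc]
  · simp [hc]

end gzero

section partone

variable (hne : ∀ A ∈ F, A.Nonempty)
  (hlam : ∀ A ∈ F, ∀ B ∈ F, A ⊆ B ∨ B ⊆ A ∨ Disjoint A B)
  (hsing : ∀ v : V, ({v} : Finset V) ∈ F)
  (hPa : ∀ S ∈ F, S ≠ Finset.univ →
      Pa S ∈ F ∧ S ⊂ Pa S ∧ ∀ R ∈ F, S ⊂ R → Pa S ⊆ R)

open Classical in
lemma capT_eq_int_sum (G : SimpleGraph V) (U : Finset (Finset V)) :
    capT G F Pa U = ((∑ A ∈ F.filter (fun A => A ≠ Finset.univ),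
      (if (A ∈ U) ↔ (Pa A ∈ U) then 0 else (cN G A : ℤ))) : ℝ) := by
  unfold capT
  refine Finset.sum_congr rfl fun A _ => ?_
  split_ifs
  · simp
  · rw [capG_compl_eq]

include hne hlam hsing hPa in
open Classical in
lemma capG_le_capT' {G : SimpleGraph V} {S : Finset V} {U : Finset (Finset V)}
    (hU : U ⊆ F) (hU1 : ∀ v ∈ S, ({v} : Finset V) ∈ U)
    (hU2 : ∀ v ∉ S, ({v} : Finset V) ∉ U) :
    capG G S Sᶜ ≤ capT G F Pa U := by
  classical
  have hid := core hne hPa (consv_g0 hne hlam hsing hPa (G := G) (S := S)) hU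
  have hflt : Finset.univ.filter (fun w => ({w} : Finset V) ∈ U) = S := by
    ext w
    simp only [mem_filter, mem_univ, true_and]
    constructor
    · intro h; by_contra hw; exact hU2 w hw h
    · exact hU1 w
  have hL : (∑ w : V, if ({w} : Finset V) ∈ U then g0 G S {w} else 0) = (cN G S : ℤ) := by
    rw [← Finset.sum_filter, hflt, g0_val]
  have hR : (∑ A ∈ F.filter (fun A => A ≠ Finset.univ),
      (if (A ∈ U) ↔ (Pa A ∈ U) then 0 else if A ∈ U then g0 G S A else - g0 G S A))
      ≤ ∑ A ∈ F.filter (fun A => A ≠ Finset.univ),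
      (if (A ∈ U) ↔ (Pa A ∈ U) then 0 else (cN G A : ℤ)) := by
    refine Finset.sum_le_sum fun A _ => ?_
    split_ifs with h1 h2
    · exact le_refl 0
    · exact le_trans (le_abs_self _) (g0_bound A)
    · exact le_trans (neg_le_abs _) (g0_bound A)
  have hint : (cN G S : ℤ) ≤ ∑ A ∈ F.filter (fun A => A ≠ Finset.univ),
      (if (A ∈ U) ↔ (Pa A ∈ U) then 0 else (cN G A : ℤ)) := by
    rw [← hL, hid]
    exact hR
  rw [capG_compl_eq, capT_eq_int_sum]
  exact_mod_cast hint

end partone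

section ff

variable (G : SimpleGraph V) (S : Finset V)

open Classical in
/-- there is a residual path from the leaf `{u}` to the tree vertex `B`. -/
noncomputable def Good (F : Finset (Finset V)) (g : Finset V → ℤ) (u : V) (B : Finset V) :
    Prop :=
  ∀ A ∈ F, A ≠ Finset.univ →
    (u ∈ A → ¬ B ⊆ A → g A < (cN G A : ℤ)) ∧ (B ⊆ A → u ∉ A → -(cN G A : ℤ) < g A)

open Classical in
/-- invariant for the flow `g`. -/
def Inv (F : Finset (Finset V)) (Pa : Finset V → Finset V) (g : Finset V → ℤ) : Prop :=
  Consv F Pa g ∧ (∀ A ∈ F, A ≠ Finset.univ → |g A| ≤ (cN G A : ℤ)) ∧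
    (∀ w ∈ S, 0 ≤ g {w}) ∧ (∀ w : V, w ∉ S → g {w} ≤ 0)

variable {G S}

lemma good_self (g : Finset V → ℤ) (u : V) : Good G F g u {u} := by
  intro A hA hAne
  constructor
  · intro h1 h2
    exact absurd (Finset.singleton_subset_iff.2 h1) h2
  · intro h1 h2
    exact absurd (Finset.singleton_subset_iff.1 h1) h2

variable (hne : ∀ A ∈ F, A.Nonempty)
  (hlam : ∀ A ∈ F, ∀ B ∈ F, A ⊆ B ∨ B ⊆ A ∨ Disjoint A B)
  (hsing : ∀ v : V, ({v} : Finset V) ∈ F)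
  (hPa : ∀ S ∈ F, S ≠ Finset.univ →
      Pa S ∈ F ∧ S ⊂ Pa S ∧ ∀ R ∈ F, S ⊂ R → Pa S ⊆ R)

include hne hlam hPa in
lemma sandwich {A B : Finset V} (hA : A ∈ F) (hB : B ∈ F) (hBne : B ≠ Finset.univ)
    (hBA : B ⊆ A) (hnPaA : ¬ Pa B ⊆ A) : A = B := by
  obtain ⟨x, hx⟩ := hne B hB
  have hcomp := chain_of_mem hlam hA (hPa B hB hBne).1 (hBA hx)
    ((hPa B hB hBne).2.1.subset hx)
  rcases hcomp with h | h
  · rcases eq_or_ssubset_of_subset h with h1 | h1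
    · exact absurd (h1 ▸ subset_rfl) hnPaA
    · rcases eq_or_ssubset_of_subset hBA with h2 | h2
      · exact h2.symm
      · exact absurd ((hPa B hB hBne).2.2 A hA h2) h1.not_subset
  · exact absurd h hnPaA

include hne hlam hPa in
lemma good_up {g : Finset V → ℤ} {u : V} {B : Finset V} (hB : B ∈ F)
    (hBne : B ≠ Finset.univ) (hg : Good G F g u B)
    (hcase : u ∉ B ∨ g B < (cN G B : ℤ)) : Good G F g u (Pa B) := by
  intro A hA hAne
  constructor
  · intro huA hnPaA
    by_cases hBA : B ⊆ A
    · have hAB : A = B := sandwich hne hlam hPa hA hB hBne hBA hnPaA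
      subst hAB
      rcases hcase with h | h
      · exact absurd huA h
      · exact h
    · exact (hg A hA hAne).1 huA hBA
  · intro hPaA huA
    exact (hg A hA hAne).2 (((hPa B hB hBne).2.1.subset).trans hPaA) huA

include hne hlam hPa in
lemma good_down {g : Finset V → ℤ} {u : V} {B : Finset V} (hB : B ∈ F)
    (hBne : B ≠ Finset.univ) (hgPa : Good G F g u (Pa B))
    (hcase : u ∈ B ∨ -(cN G B : ℤ) < g B) : Good G F g u B := by
  intro A hA hAne
  constructor
  · intro huA hnBA
    have hnPaA : ¬ Pa B ⊆ A := fun h => hnBA (((hPa B hB hBne).2.1.subset).trans h)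
    exact (hgPa A hA hAne).1 huA hnPaA
  · intro hBA huA
    by_cases hPaBA : Pa B ⊆ A
    · exact (hgPa A hA hAne).2 hPaBA huA
    · have hAB : A = B := sandwich hne hlam hPa hA hB hBne hBA hPaBA
      subst hAB
      rcases hcase with h | h
      · exact absurd h huA
      · exact h

lemma dP_singleton_left {u v w : V} (hu : u ∈ S) (hv : v ∉ S) (hw : w ∈ S) :
    dP u v {w} = if w = u then (1 : ℤ) else 0 := by
  have hvw : v ≠ w := fun h => hv (h ▸ hw)
  unfold dP
  by_cases hwu : w = u
  · subst hwu
    simp [hvw]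
  · have huw : u ≠ w := fun h => hwu h.symm
    simp [huw, hvw, hwu]

include hne hlam hsing hPa in
lemma augment {g : Finset V → ℤ} {u v : V} (hu : u ∈ S) (hv : v ∉ S)
    (hgood : Good G F g u {v}) (hInv : Inv G S F Pa g) :
    Inv G S F Pa (fun A => g A + dP u v A) ∧
      (∑ w ∈ S, (g ({w} : Finset V) + dP u v ({w} : Finset V))) = (∑ w ∈ S, g {w}) + 1 := by
  have huv : u ≠ v := fun h => hv (h ▸ hu)
  constructor
  · refine ⟨consv_add hInv.1 (consv_dP hne hlam hsing hPa u v), ?_, ?_, ?_⟩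
    · intro A hA hAne
      have hb := hInv.2.1 A hA hAne
      show |g A + dP u v A| ≤ (cN G A : ℤ)
      rw [abs_le] at hb ⊢
      by_cases h1 : u ∈ A ∧ v ∉ A
      · have h2 : ¬ (v ∈ A ∧ u ∉ A) := fun h => h.2 h1.1
        have hlt : g A < (cN G A : ℤ) := (hgood A hA hAne).1 h1.1
          (fun h => h1.2 (Finset.singleton_subset_iff.1 h))
        have hdp : dP u v A = 1 := by unfold dP; rw [if_pos h1, if_neg h2]; norm_num
        rw [hdp]
        omega
      · by_cases h2 : v ∈ A ∧ u ∉ A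
        · have hgt : -(cN G A : ℤ) < g A := (hgood A hA hAne).2
            (Finset.singleton_subset_iff.2 h2.1) h2.2
          have hdp : dP u v A = -1 := by unfold dP; rw [if_neg h1, if_pos h2]; norm_num
          rw [hdp]
          omega
        · have hdp : dP u v A = 0 := by unfold dP; rw [if_neg h1, if_neg h2]; norm_num
          rw [hdp]
          omega
    · intro w hw
      have hs := hInv.2.2.1 w hw
      show 0 ≤ g {w} + dP u v {w}
      rw [dP_singleton_left hu hv hw]
      split_ifs <;> omega
    · intro w hw
      have hs := hInv.2.2.2 w hw
      show g {w} + dP u v {w} ≤ 0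
      have h1 : ¬ (u ∈ ({w} : Finset V) ∧ v ∉ ({w} : Finset V)) := by
        intro h
        exact hw ((Finset.mem_singleton.1 h.1) ▸ hu)
      by_cases hwv : v ∈ ({w} : Finset V) ∧ u ∉ ({w} : Finset V)
      · have hdp : dP u v {w} = -1 := by unfold dP; rw [if_neg h1, if_pos hwv]; norm_num
        rw [hdp]
        omega
      · have hdp : dP u v {w} = 0 := by unfold dP; rw [if_neg h1, if_neg hwv]; norm_num
        rw [hdp]
        omega
  · rw [Finset.sum_add_distrib]
    congr 1
    have : ∀ w ∈ S, dP u v {w} = if w = u then (1:ℤ) else 0 :=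
      fun w hw => dP_singleton_left hu hv hw
    rw [Finset.sum_congr rfl this, Finset.sum_ite_eq' S u (fun _ => (1:ℤ)), if_pos hu]

open Classical in
lemma capT_eq_cast (G : SimpleGraph V) (U : Finset (Finset V)) :
    capT G F Pa U = (((∑ A ∈ F.filter (fun A => A ≠ Finset.univ),
      (if (A ∈ U) ↔ (Pa A ∈ U) then (0:ℤ) else (cN G A : ℤ))) : ℤ) : ℝ) := by
  unfold capT
  rw [Int.cast_sum]
  refine Finset.sum_congr rfl fun A _ => ?_
  split_ifs
  · simp
  · rw [capG_compl_eq]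

include hne hlam hsing hPa in
open Classical in
lemma ff_exists :
    ∃ g, Inv G S F Pa g ∧ mincutT G F Pa S ≤ (((∑ w ∈ S, g ({w} : Finset V)) : ℤ) : ℝ) := by
  classical
  have hbdd : BddBelow {x : ℝ | ∃ U : Finset (Finset V), U ⊆ F ∧
      (∀ v ∈ S, ({v} : Finset V) ∈ U) ∧ (∀ v ∉ S, ({v} : Finset V) ∉ U) ∧
      x = capT G F Pa U} := by
    refine ⟨0, ?_⟩
    rintro x ⟨U, _, _, _, rfl⟩
    exact capT_nonneg G F Pa U
  have hmle : ∀ U : Finset (Finset V), U ⊆ F → (∀ v ∈ S, ({v} : Finset V) ∈ U) →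
      (∀ v ∉ S, ({v} : Finset V) ∉ U) → mincutT G F Pa S ≤ capT G F Pa U := by
    intro U h1 h2 h3
    exact csInf_le hbdd ⟨U, h1, h2, h3, rfl⟩
  have key : ∀ k : ℕ, ∃ g, Inv G S F Pa g ∧
      ((∑ w ∈ S, g ({w} : Finset V)) = (k : ℤ) ∨
        mincutT G F Pa S ≤ (((∑ w ∈ S, g ({w} : Finset V)) : ℤ) : ℝ)) := by
    intro k
    induction k with
    | zero =>
      refine ⟨fun _ => 0, ⟨⟨rfl, fun B hB hBs => by simp⟩, ?_, ?_, ?_⟩, Or.inl (by simp)⟩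
      · intro A hA hAne; simp
      · intro w hw; simp
      · intro w hw; simp
    | succ k ih =>
      obtain ⟨g, hInv, hval⟩ := ih
      rcases hval with hval | hval
      · by_cases hge : mincutT G F Pa S ≤ (((∑ w ∈ S, g ({w} : Finset V)) : ℤ) : ℝ)
        · exact ⟨g, hInv, Or.inr hge⟩
        by_cases hreach : ∃ v, v ∉ S ∧ ∃ u ∈ S, Good G F g u ({v} : Finset V)
        · obtain ⟨v, hv, u, hu, hgood⟩ := hreach
          obtain ⟨hInv', hval'⟩ := augment hne hlam hsing hPa hu hv hgood hInv
          refine ⟨_, hInv', Or.inl ?_⟩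
          rw [hval', hval]
          push_cast
          ring
        · exfalso
          set U := F.filter (fun B => ∃ u ∈ S, Good G F g u B) with hUdef
          have hUsub : U ⊆ F := Finset.filter_subset _ _
          have hU1 : ∀ w ∈ S, ({w} : Finset V) ∈ U := fun w hw =>
            Finset.mem_filter.2 ⟨hsing w, w, hw, good_self g w⟩
          have hU2 : ∀ w, w ∉ S → ({w} : Finset V) ∉ U := fun w hw hmem =>
            hreach ⟨w, hw, (Finset.mem_filter.1 hmem).2⟩
          have hsat : ∀ A ∈ F.filter (fun A => A ≠ Finset.univ),
              ¬ ((A ∈ U) ↔ (Pa A ∈ U)) →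
              (if A ∈ U then g A else - g A) = (cN G A : ℤ) := by
            intro A hAf hcross
            obtain ⟨hA, hAne⟩ := Finset.mem_filter.1 hAf
            have hb := hInv.2.1 A hA hAne
            by_cases hAU : A ∈ U
            · have hPaU : Pa A ∉ U := fun h => hcross ⟨fun _ => h, fun _ => hAU⟩
              obtain ⟨u, hu, hgood⟩ := (Finset.mem_filter.1 hAU).2
              rw [if_pos hAU]
              by_cases hge2 : g A < (cN G A : ℤ)
              · exact absurd (Finset.mem_filter.2 ⟨(hPa A hA hAne).1,
                  u, hu, good_up hne hlam hPa hA hAne hgood (Or.inr hge2)⟩) hPaU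
              · rw [abs_le] at hb; omega
            · have hPaU : Pa A ∈ U := by
                by_contra h
                exact hcross ⟨fun hh => absurd hh hAU, fun hh => absurd hh h⟩
              obtain ⟨u, hu, hgood⟩ := (Finset.mem_filter.1 hPaU).2
              rw [if_neg hAU]
              have h1 : u ∉ A := fun h => hAU (Finset.mem_filter.2 ⟨hA, u, hu,
                good_down hne hlam hPa hA hAne hgood (Or.inl h)⟩)
              have h2 : ¬ (-(cN G A : ℤ) < g A) := fun h => hAU (Finset.mem_filter.2
                ⟨hA, u, hu, good_down hne hlam hPa hA hAne hgood (Or.inr h)⟩)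
              rw [abs_le] at hb; omega
          have hid := core hne hPa hInv.1 hUsub
          have hflt : Finset.univ.filter (fun w => ({w} : Finset V) ∈ U) = S := by
            ext w
            simp only [Finset.mem_filter, Finset.mem_univ, true_and]
            exact ⟨fun h => by by_contra hw; exact hU2 w hw h, hU1 w⟩
          have hL : (∑ w : V, if ({w} : Finset V) ∈ U then g {w} else 0)
              = ∑ w ∈ S, g ({w} : Finset V) := by
            rw [← Finset.sum_filter, hflt]
          have hR : (∑ A ∈ F.filter (fun A => A ≠ Finset.univ),
              (if (A ∈ U) ↔ (Pa A ∈ U) then 0 else if A ∈ U then g A else - g A))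
              = ∑ A ∈ F.filter (fun A => A ≠ Finset.univ),
                (if (A ∈ U) ↔ (Pa A ∈ U) then (0:ℤ) else (cN G A : ℤ)) := by
            refine Finset.sum_congr rfl fun A hAf => ?_
            by_cases hcross : (A ∈ U) ↔ (Pa A ∈ U)
            · rw [if_pos hcross, if_pos hcross]
            · rw [if_neg hcross, if_neg hcross, hsat A hAf hcross]
          have hZ : (∑ w ∈ S, g ({w} : Finset V))
              = ∑ A ∈ F.filter (fun A => A ≠ Finset.univ),
                (if (A ∈ U) ↔ (Pa A ∈ U) then (0:ℤ) else (cN G A : ℤ)) := by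
            rw [← hL, hid, hR]
          have hfin : (((∑ w ∈ S, g ({w} : Finset V)) : ℤ) : ℝ) = capT G F Pa U := by
            rw [capT_eq_cast, hZ]
          exact hge (hfin ▸ hmle U hUsub hU1 hU2)
      · exact ⟨g, hInv, Or.inr hval⟩
  obtain ⟨g, hInv, hval⟩ := key ⌈mincutT G F Pa S⌉₊
  rcases hval with h | h
  · refine ⟨g, hInv, ?_⟩
    rw [h]
    push_cast
    exact Nat.le_ceil _
  · exact ⟨g, hInv, h⟩

end ff

section decomp

variable {G : SimpleGraph V} {S : Finset V} {g : Finset V → ℤ}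

variable (hne : ∀ A ∈ F, A.Nonempty)
  (hlam : ∀ A ∈ F, ∀ B ∈ F, A ⊆ B ∨ B ⊆ A ∨ Disjoint A B)
  (hsing : ∀ v : V, ({v} : Finset V) ∈ F)
  (hPa : ∀ S ∈ F, S ≠ Finset.univ →
      Pa S ∈ F ∧ S ⊂ Pa S ∧ ∀ R ∈ F, S ⊂ R → Pa S ⊆ R)

include hlam hPa in
lemma children_disjoint {P A A' : Finset V} (hA : A ∈ ch F Pa P) (hA' : A' ∈ ch F Pa P)
    (hAA : A ≠ A') : Disjoint A A' := by
  rw [Finset.disjoint_left]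
  intro x hx hx'
  exact hAA (child_unique hlam hPa hA hA' hx hx')

include hne hlam hsing hPa in
lemma descend (hg : Consv F Pa g) (hsgn : ∀ w ∈ S, 0 ≤ g {w}) :
    ∀ n : ℕ, ∀ A ∈ F, A.card ≤ n → g A ≤ -1 →
      ∃ v, v ∈ A ∧ v ∉ S ∧ ∀ A' ∈ F, v ∈ A' → A' ⊆ A → g A' ≤ -1 := by
  intro n
  induction n with
  | zero =>
    intro A hA hcard _
    obtain ⟨x, hx⟩ := hne A hA
    rw [Nat.le_zero, Finset.card_eq_zero] at hcard
    subst hcard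
    exact absurd hx (Finset.notMem_empty x)
  | succ n ih =>
    intro A hA hcard hgA
    by_cases h1 : A.card = 1
    · obtain ⟨x, hx⟩ := Finset.card_eq_one.1 h1
      subst hx
      refine ⟨x, Finset.mem_singleton_self x, ?_, ?_⟩
      · intro hxS
        exact absurd (hsgn x hxS) (by omega)
      · intro A' hA' hxA' hsub
        rcases Finset.subset_singleton_iff.1 hsub with h | h
        · subst h; exact absurd hxA' (Finset.notMem_empty x)
        · subst h; exact hgA
    · have hAs : ∀ y : V, A ≠ {y} := fun y h => h1 (h ▸ Finset.card_singleton y)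
      have hsum := hg.2 A hA hAs
      have hexists : ∃ A'' ∈ ch F Pa A, g A'' ≤ -1 := by
        by_contra h
        push_neg at h
        have : (0:ℤ) ≤ ∑ B ∈ ch F Pa A, g B :=
          Finset.sum_nonneg fun B hB => by have := h B hB; omega
        omega
      obtain ⟨A'', hA''ch, hgA''⟩ := hexists
      obtain ⟨hA''F, hA''ne, hA''Pa, hA''ss⟩ := mem_ch hPa hA''ch
      have hcard'' : A''.card ≤ n := by
        have := Finset.card_lt_card hA''ss
        omega
      obtain ⟨v, hvA'', hvS, hcond⟩ := ih A'' hA''F hcard'' hgA''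
      refine ⟨v, hA''ss.subset hvA'', hvS, ?_⟩
      intro A' hA' hvA' hsub
      rcases eq_or_ssubset_of_subset hsub with h | h
      · subst h; exact hgA
      · rcases chain_of_mem hlam hA' hA''F hvA' hvA'' with hc | hc
        · exact hcond A' hA' hvA' hc
        · rcases eq_or_ssubset_of_subset hc with h2 | h2
          · exact hcond A' hA' hvA' (h2 ▸ subset_rfl)
          · have := (hPa A'' hA''F hA''ne).2.2 A' hA' h2
            rw [hA''Pa] at this
            exact absurd this h.not_subset

include hne hlam hsing hPa in
lemma ascend (hg : Consv F Pa g) (hsgn : ∀ w ∈ S, 0 ≤ g {w}) :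
    ∀ n : ℕ, ∀ B ∈ F, B ≠ Finset.univ → Fintype.card V - B.card ≤ n → 1 ≤ g B →
      ∃ v, v ∉ B ∧ v ∉ S ∧
        (∀ A ∈ F, A ≠ Finset.univ → B ⊆ A → v ∉ A → 1 ≤ g A) ∧
        (∀ A ∈ F, v ∈ A → Disjoint A B → g A ≤ -1) := by
  intro n
  induction n with
  | zero =>
    intro B hB hBne hcard _
    have h1 : B.card ≤ Fintype.card V := Finset.card_le_univ B
    have h2 : B.card = Fintype.card V := by omega
    exact absurd (Finset.eq_univ_of_card B h2) hBne
  | succ n ih =>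
    intro B hB hBne hcard hgB
    obtain ⟨hPF, hPss, hPmin⟩ := hPa B hB hBne
    have hBch : B ∈ ch F Pa (Pa B) := by
      rw [ch, Finset.mem_filter]
      exact ⟨hB, hBne, rfl⟩
    have hPs : ∀ x : V, Pa B ≠ {x} := by
      intro x h
      rcases Finset.subset_singleton_iff.1 (h ▸ hPss.subset) with h2 | h2
      · exact absurd (h2 ▸ hne B hB) (by simp)
      · exact hPss.ne (h2.trans h.symm)
    by_cases hsib : ∃ A0 ∈ ch F Pa (Pa B), A0 ≠ B ∧ g A0 ≤ -1
    · obtain ⟨A0, hA0ch, hA0ne, hgA0⟩ := hsib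
      obtain ⟨hA0F, hA0une, hA0Pa, hA0ss⟩ := mem_ch hPa hA0ch
      obtain ⟨v, hvA0, hvS, hcond⟩ :=
        descend hne hlam hsing hPa hg hsgn A0.card A0 hA0F le_rfl hgA0
      have hdisj : Disjoint A0 B := children_disjoint hlam hPa hA0ch hBch hA0ne
      refine ⟨v, fun hvB => (Finset.disjoint_left.1 hdisj) hvA0 hvB, hvS, ?_, ?_⟩
      · intro A hA hAne hBA hvA
        rcases eq_or_ssubset_of_subset hBA with h | h
        · exact h ▸ hgB
        · exact absurd ((hA0ss.subset.trans (hPmin A hA h)) hvA0) hvA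
      · intro A hA hvA hdAB
        rcases chain_of_mem hlam hA hA0F hvA hvA0 with hc | hc
        · exact hcond A hA hvA hc
        · rcases eq_or_ssubset_of_subset hc with h2 | h2
          · exact hcond A hA hvA (h2 ▸ subset_rfl)
          · have hPaA0 := (hPa A0 hA0F hA0une).2.2 A hA h2
            rw [hA0Pa] at hPaA0
            have hBA : B ⊆ A := hPss.subset.trans hPaA0
            obtain ⟨x, hx⟩ := hne B hB
            exact absurd (hBA hx) (Finset.disjoint_right.1 hdAB hx)
    · have hallsib : ∀ A ∈ ch F Pa (Pa B), A ≠ B → 0 ≤ g A := by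
        intro A hA hAB
        by_contra h
        exact hsib ⟨A, hA, hAB, by omega⟩
      have hsum1 : 1 ≤ ∑ A ∈ ch F Pa (Pa B), g A := by
        rw [← Finset.sum_erase_add _ _ hBch]
        have h0 : (0:ℤ) ≤ ∑ A ∈ (ch F Pa (Pa B)).erase B, g A := by
          refine Finset.sum_nonneg fun A hA => ?_
          exact hallsib A (Finset.mem_of_mem_erase hA) (Finset.ne_of_mem_erase hA)
        omega
      rw [hg.2 (Pa B) hPF hPs] at hsum1
      by_cases hP : Pa B = Finset.univ
      · rw [hP, hg.1] at hsum1
        omega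
      · have hmeas : Fintype.card V - (Pa B).card ≤ n := by
          have h1 := Finset.card_lt_card hPss
          have h2 : (Pa B).card ≤ Fintype.card V := Finset.card_le_univ _
          omega
        obtain ⟨v, hvP, hvS, hup, hdown⟩ := ih (Pa B) hPF hP hmeas hsum1
        refine ⟨v, fun hvB => hvP (hPss.subset hvB), hvS, ?_, ?_⟩
        · intro A hA hAne hBA hvA
          rcases eq_or_ssubset_of_subset hBA with h | h
          · exact h ▸ hgB
          · exact hup A hA hAne (hPmin A hA h) hvA
        · intro A hA hvA hdAB
          have hdAP : Disjoint A (Pa B) := by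
            rcases hlam A hA (Pa B) hPF with h | h | h
            · exact absurd (h hvA) hvP
            · obtain ⟨x, hx⟩ := hne B hB
              exact absurd (h (hPss.subset hx)) (Finset.disjoint_right.1 hdAB hx)
            · exact h
          exact hdown A hA hvA hdAP

lemma sum_pair_ite (f : V → V → ℤ) (u v : V) :
    (∑ x : V, ∑ y : V, (if x = u ∧ y = v then f x y else 0)) = f u v := by
  have h1 : ∀ x : V, (∑ y : V, (if x = u ∧ y = v then f x y else 0))
      = if x = u then f x v else 0 := by
    intro x
    by_cases hx : x = u
    · simp only [hx, true_and]
      rw [Finset.sum_ite_eq' Finset.univ v (f u)]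
      simp
    · simp [hx]
  rw [Finset.sum_congr rfl fun x _ => h1 x, Finset.sum_ite_eq' Finset.univ u (fun x => f x v)]
  simp

include hne hlam hsing hPa in
lemma decomp {S : Finset V} :
    ∀ n : ℕ, ∀ g : Finset V → ℤ, Consv F Pa g → (∀ w ∈ S, 0 ≤ g {w}) →
      (∀ w : V, w ∉ S → g ({w} : Finset V) ≤ 0) → (∑ w ∈ S, g {w}) ≤ (n : ℤ) →
      ∃ Rn : V → V → ℕ,
        (∀ u v : V, Rn u v ≠ 0 → u ∈ S ∧ v ∉ S) ∧
        (∀ A ∈ F, A ≠ Finset.univ →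
          (∑ u : V, ∑ v : V, (Rn u v : ℤ) * |dP u v A|) ≤ |g A|) ∧
        ((∑ u : V, ∑ v : V, (Rn u v : ℤ)) = ∑ w ∈ S, g {w}) := by
  intro n
  induction n with
  | zero =>
    intro g hg hs1 hs2 hval
    have hval0 : (∑ w ∈ S, g {w}) = 0 :=
      le_antisymm hval (Finset.sum_nonneg fun w hw => hs1 w hw)
    refine ⟨fun _ _ => 0, fun u v h => absurd rfl h, ?_, by simpa using hval0.symm⟩
    intro A hA hAne
    have : (∑ u : V, ∑ v : V, ((0:ℕ) : ℤ) * |dP u v A|) = 0 := by simp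
    rw [this]
    exact abs_nonneg _
  | succ n ih =>
    intro g hg hs1 hs2 hval
    by_cases hval' : (∑ w ∈ S, g {w}) ≤ (n : ℤ)
    · exact ih g hg hs1 hs2 hval'
    have hval1 : 1 ≤ ∑ w ∈ S, g {w} := by push_cast at hval hval' ⊢; omega
    have hexu : ∃ u ∈ S, 1 ≤ g {u} := by
      by_contra h
      push_neg at h
      have : (∑ w ∈ S, g {w}) ≤ 0 := Finset.sum_nonpos fun w hw => by
        have h1 := h w hw; omega
      omega
    obtain ⟨u, hu, hgu⟩ := hexu
    have huu : ({u} : Finset V) ≠ Finset.univ := by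
      intro h
      rw [h, hg.1] at hgu
      omega
    obtain ⟨v, hvu, hvS, hup, hdown⟩ := ascend hne hlam hsing hPa hg hs1
      (Fintype.card V) ({u} : Finset V) (hsing u) huu (Nat.sub_le _ _) hgu
    have huv : u ≠ v := fun h => hvu (h ▸ Finset.mem_singleton_self u)
    have hup' : ∀ A ∈ F, A ≠ Finset.univ → u ∈ A → v ∉ A → 1 ≤ g A := by
      intro A hA hAne h1 h2
      exact hup A hA hAne (Finset.singleton_subset_iff.2 h1) h2
    have hdown' : ∀ A ∈ F, v ∈ A → u ∉ A → g A ≤ -1 := by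
      intro A hA h1 h2
      exact hdown A hA h1 (Finset.disjoint_singleton_right.2 h2)
    set g' : Finset V → ℤ := fun A => g A - dP u v A with hg'def
    have hg'c : Consv F Pa g' := consv_sub hg (consv_dP hne hlam hsing hPa u v)
    have hdPw : ∀ w ∈ S, dP u v {w} = if w = u then (1:ℤ) else 0 := fun w hw =>
      dP_singleton_left hu hvS hw
    have hg's1 : ∀ w ∈ S, 0 ≤ g' {w} := by
      intro w hw
      show 0 ≤ g {w} - dP u v {w}
      rw [hdPw w hw]
      by_cases hwu2 : w = u
      · subst hwu2; simp only [if_pos rfl]; omega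
      · have := hs1 w hw; simp only [if_neg hwu2]; omega
    have hg's2 : ∀ w : V, w ∉ S → g' ({w} : Finset V) ≤ 0 := by
      intro w hw
      show g {w} - dP u v {w} ≤ 0
      by_cases hwv : w = v
      · have hdp : dP u v {w} = -1 := by
          unfold dP
          have h1 : ¬ (u ∈ ({w} : Finset V) ∧ v ∉ ({w} : Finset V)) := fun h =>
            h.2 (Finset.mem_singleton.2 hwv.symm)
          have h2 : v ∈ ({w} : Finset V) ∧ u ∉ ({w} : Finset V) :=
            ⟨Finset.mem_singleton.2 hwv.symm,
              fun h => huv ((Finset.mem_singleton.1 h).trans hwv)⟩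
          rw [if_neg h1, if_pos h2]; norm_num
        have hgw : g {w} ≤ -1 := hdown' {w} (hsing w) (Finset.mem_singleton.2 hwv.symm)
          (fun h => huv ((Finset.mem_singleton.1 h).trans hwv))
        omega
      · have hdp : dP u v {w} = 0 := by
          unfold dP
          have h1 : ¬ (u ∈ ({w} : Finset V) ∧ v ∉ ({w} : Finset V)) := fun h =>
            hw ((Finset.mem_singleton.1 h.1) ▸ hu)
          have h2 : ¬ (v ∈ ({w} : Finset V) ∧ u ∉ ({w} : Finset V)) := fun h =>
            hwv ((Finset.mem_singleton.1 h.1).symm)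
          rw [if_neg h1, if_neg h2]; norm_num
        have := hs2 w hw
        omega
    have hg'val : (∑ w ∈ S, g' {w}) = (∑ w ∈ S, g {w}) - 1 := by
      show (∑ w ∈ S, (g {w} - dP u v {w})) = _
      rw [Finset.sum_sub_distrib]
      congr 1
      rw [Finset.sum_congr rfl hdPw, Finset.sum_ite_eq' S u (fun _ => (1:ℤ)), if_pos hu]
    obtain ⟨Rn', hsupp', hsep', htot'⟩ := ih g' hg'c hg's1 hg's2 (by omega)
    refine ⟨fun x y => Rn' x y + (if x = u ∧ y = v then 1 else 0), ?_, ?_, ?_⟩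
    · intro x y h
      by_cases hxy : x = u ∧ y = v
      · exact ⟨hxy.1 ▸ hu, hxy.2 ▸ hvS⟩
      · refine hsupp' x y fun h0 => h ?_
        simp [h0, hxy]
    · intro A hA hAne
      have hsplit : (∑ x : V, ∑ y : V,
          ((Rn' x y + (if x = u ∧ y = v then 1 else 0) : ℕ) : ℤ) * |dP x y A|)
          = (∑ x : V, ∑ y : V, (Rn' x y : ℤ) * |dP x y A|) + |dP u v A| := by
        have h1 : ∀ x y : V, ((Rn' x y + (if x = u ∧ y = v then 1 else 0) : ℕ) : ℤ)
            * |dP x y A|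
            = (Rn' x y : ℤ) * |dP x y A| + (if x = u ∧ y = v then |dP x y A| else 0) := by
          intro x y
          push_cast
          by_cases hxy : x = u ∧ y = v <;> simp [hxy] <;> ring
        simp_rw [h1, Finset.sum_add_distrib]
        congr 1
        rw [sum_pair_ite (fun x y => |dP x y A|) u v]
      rw [hsplit]
      have hkey : |g' A| + |dP u v A| ≤ |g A| := by
        show |g A - dP u v A| + |dP u v A| ≤ |g A|
        by_cases h1 : u ∈ A ∧ v ∉ A
        · have h2 : ¬ (v ∈ A ∧ u ∉ A) := fun h => h.2 h1.1
          have hdp : dP u v A = 1 := by unfold dP; rw [if_pos h1, if_neg h2]; norm_num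
          have hga : 1 ≤ g A := hup' A hA hAne h1.1 h1.2
          rw [hdp, abs_one, abs_of_nonneg (by omega : (0:ℤ) ≤ g A - 1),
            abs_of_nonneg (by omega : (0:ℤ) ≤ g A)]
          omega
        · by_cases h2 : v ∈ A ∧ u ∉ A
          · have hdp : dP u v A = -1 := by unfold dP; rw [if_neg h1, if_pos h2]; norm_num
            have hga : g A ≤ -1 := hdown' A hA h2.1 h2.2
            rw [hdp, abs_neg, abs_one, abs_of_nonpos (by omega : g A - -1 ≤ 0),
              abs_of_nonpos (by omega : g A ≤ 0)]
            omega
          · have hdp : dP u v A = 0 := by unfold dP; rw [if_neg h1, if_neg h2]; norm_num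
            rw [hdp, sub_zero, abs_zero, add_zero]
      exact le_trans (add_le_add_left (hsep' A hA hAne) _) hkey
    · have : (∑ x : V, ∑ y : V,
          ((Rn' x y + (if x = u ∧ y = v then 1 else 0) : ℕ) : ℤ))
          = (∑ x : V, ∑ y : V, (Rn' x y : ℤ))
            + ∑ x : V, ∑ y : V, (if x = u ∧ y = v then (1:ℤ) else 0) := by
        rw [← Finset.sum_add_distrib]
        simp_rw [← Finset.sum_add_distrib]
        refine Finset.sum_congr rfl fun x _ => Finset.sum_congr rfl fun y _ => ?_
        push_cast
        by_cases hxy : x = u ∧ y = v <;> simp [hxy]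
      rw [this, htot', sum_pair_ite (fun _ _ => (1:ℤ)) u v, hg'val]
      ring

end decomp

end CutSparsifierAux

open CutSparsifierAux in
/-- If `G` `(1/α)`-respects every demand matrix that is `1`-respected by the
hierarchical-decomposition tree `T` given by the laminar family `F` (with parent
function `Pa`), then `T` is a cut-sparsifier of `G` of quality `α`. -/
theorem respecting_demand_matrices_implies_cut_sparsifier
    {V : Type} [Fintype V] [DecidableEq V] (G : SimpleGraph V)
    (F : Finset (Finset V)) (Pa : Finset V → Finset V) (α : ℝ) (hα : 1 ≤ α)
    (hne : ∀ A ∈ F, A.Nonempty)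
    (hlam : ∀ A ∈ F, ∀ B ∈ F, A ⊆ B ∨ B ⊆ A ∨ Disjoint A B)
    (huniv : Finset.univ ∈ F)
    (hsing : ∀ v : V, ({v} : Finset V) ∈ F)
    (hPa : ∀ S ∈ F, S ≠ Finset.univ →
      Pa S ∈ F ∧ S ⊂ Pa S ∧ ∀ R ∈ F, S ⊂ R → Pa S ⊆ R)
    (hresp : ∀ R : V → V → ℝ, (∀ u v, 0 ≤ R u v) →
      (∀ U : Finset (Finset V), U ⊆ F → U.Nonempty → (F \ U).Nonempty →
        (∑ u : V, ∑ v : V,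
            if ({u} : Finset V) ∈ U ∧ ({v} : Finset V) ∉ U then R u v + R v u else 0)
          ≤ capT G F Pa U) →
      ∀ S : Finset V, S.Nonempty → S ≠ Finset.univ →
        (1 / α) * (∑ u ∈ S, ∑ v ∈ Sᶜ, (R u v + R v u)) ≤ capG G S Sᶜ) :
    ∀ S : Finset V, S.Nonempty → S ≠ Finset.univ →
      capG G S Sᶜ ≤ mincutT G F Pa S ∧ mincutT G F Pa S ≤ α * capG G S Sᶜ := by
  intro S hSne hSuniv
  classical
  have hα0 : (0:ℝ) < α := lt_of_lt_of_le one_pos hα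
  -- the lower bound
  have hlow : capG G S Sᶜ ≤ mincutT G F Pa S := by
    have hne0 : {x : ℝ | ∃ U : Finset (Finset V), U ⊆ F ∧
        (∀ v ∈ S, ({v} : Finset V) ∈ U) ∧ (∀ v ∉ S, ({v} : Finset V) ∉ U) ∧
        x = capT G F Pa U}.Nonempty := by
      refine ⟨capT G F Pa (F.filter (fun A => A ⊆ S)), F.filter (fun A => A ⊆ S),
        Finset.filter_subset _ _, ?_, ?_, rfl⟩
      · intro v hv
        exact Finset.mem_filter.2 ⟨hsing v, Finset.singleton_subset_iff.2 hv⟩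
      · intro v hv hmem
        exact hv (Finset.singleton_subset_iff.1 (Finset.mem_filter.1 hmem).2)
    refine le_csInf hne0 ?_
    rintro x ⟨U, hU, h1, h2, rfl⟩
    exact capG_le_capT' hne hlam hsing hPa hU h1 h2
  refine ⟨hlow, ?_⟩
  -- max-flow
  obtain ⟨g, hInv, hval⟩ := ff_exists hne hlam hsing hPa (G := G) (S := S)
  -- flow decomposition
  obtain ⟨Rn, hsupp, hsep, htot⟩ := decomp hne hlam hsing hPa (S := S)
    (∑ w ∈ S, g {w}).toNat g hInv.1 hInv.2.2.1 hInv.2.2.2 (Int.self_le_toNat _)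
  set R : V → V → ℝ := fun u v => (Rn u v : ℝ) with hRdef
  have hR0 : ∀ u v, 0 ≤ R u v := fun u v => Nat.cast_nonneg _
  -- the tree 1-respects R
  have hprem : ∀ U : Finset (Finset V), U ⊆ F → U.Nonempty → (F \ U).Nonempty →
      (∑ u : V, ∑ v : V,
          if ({u} : Finset V) ∈ U ∧ ({v} : Finset V) ∉ U then R u v + R v u else 0)
        ≤ capT G F Pa U := by
    intro U hU _ _
    have hpair : ∀ u v : V, ¬ ((({u} : Finset V) ∈ U) ↔ (({v} : Finset V) ∈ U)) →
        (1:ℤ) ≤ ∑ A ∈ F.filter (fun A => A ≠ Finset.univ),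
          (if (A ∈ U) ↔ (Pa A ∈ U) then 0 else |dP u v A|) := by
      intro u v hsepr
      have huv : u ≠ v := fun h => hsepr (h ▸ Iff.rfl)
      have hid := core hne hPa (consv_dP hne hlam hsing hPa u v) hU
      have hterm : ∀ w : V, (if ({w} : Finset V) ∈ U then dP u v {w} else 0)
          = (if w = u then (if ({u} : Finset V) ∈ U then (1:ℤ) else 0) else 0)
            - (if w = v then (if ({v} : Finset V) ∈ U then (1:ℤ) else 0) else 0) := by
        intro w
        by_cases hwu : w = u
        · have hdp : dP u v {w} = 1 := by
            unfold dP
            have h1 : u ∈ ({w} : Finset V) ∧ v ∉ ({w} : Finset V) :=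
              ⟨Finset.mem_singleton.2 hwu.symm,
                fun h => huv (((Finset.mem_singleton.1 h).trans hwu).symm)⟩
            have h2 : ¬ (v ∈ ({w} : Finset V) ∧ u ∉ ({w} : Finset V)) := fun h =>
              h.2 (Finset.mem_singleton.2 hwu.symm)
            rw [if_pos h1, if_neg h2]; norm_num
          have hwv : ¬ w = v := fun h => huv (hwu.symm.trans h)
          rw [hdp, if_pos hwu, if_neg hwv, hwu, sub_zero]
        · by_cases hwv : w = v
          · have hdp : dP u v {w} = -1 := by
              unfold dP
              have h1 : ¬ (u ∈ ({w} : Finset V) ∧ v ∉ ({w} : Finset V)) := fun h =>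
                h.2 (Finset.mem_singleton.2 hwv.symm)
              have h2 : v ∈ ({w} : Finset V) ∧ u ∉ ({w} : Finset V) :=
                ⟨Finset.mem_singleton.2 hwv.symm,
                  fun h => hwu (Finset.mem_singleton.1 h).symm⟩
              rw [if_neg h1, if_pos h2]; norm_num
            rw [hdp, if_neg hwu, if_pos hwv, hwv, zero_sub]
            split_ifs <;> norm_num
          · have hdp : dP u v {w} = 0 := by
              unfold dP
              have h1 : ¬ (u ∈ ({w} : Finset V) ∧ v ∉ ({w} : Finset V)) := fun h =>
                hwu (Finset.mem_singleton.1 h.1).symm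
              have h2 : ¬ (v ∈ ({w} : Finset V) ∧ u ∉ ({w} : Finset V)) := fun h =>
                hwv (Finset.mem_singleton.1 h.1).symm
              rw [if_neg h1, if_neg h2]; norm_num
            rw [hdp]
            simp [hwu, hwv]
      have hLcomp : (∑ w : V, if ({w} : Finset V) ∈ U then dP u v {w} else 0)
          = (if ({u} : Finset V) ∈ U then (1:ℤ) else 0)
            - (if ({v} : Finset V) ∈ U then 1 else 0) := by
        rw [Finset.sum_congr rfl fun w _ => hterm w, Finset.sum_sub_distrib,
          Finset.sum_ite_eq' Finset.univ u
            (fun _ => (if ({u} : Finset V) ∈ U then (1:ℤ) else 0)),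
          Finset.sum_ite_eq' Finset.univ v
            (fun _ => (if ({v} : Finset V) ∈ U then (1:ℤ) else 0))]
        simp
      have habs : |∑ A ∈ F.filter (fun A => A ≠ Finset.univ),
          (if (A ∈ U) ↔ (Pa A ∈ U) then 0 else if A ∈ U then dP u v A else - dP u v A)|
          ≤ ∑ A ∈ F.filter (fun A => A ≠ Finset.univ),
            (if (A ∈ U) ↔ (Pa A ∈ U) then 0 else |dP u v A|) := by
        refine le_trans (Finset.abs_sum_le_sum_abs _ _) (Finset.sum_le_sum fun A _ => ?_)
        split_ifs <;> simp
      have h1 : |(if ({u} : Finset V) ∈ U then (1:ℤ) else 0)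
          - (if ({v} : Finset V) ∈ U then 1 else 0)| = 1 := by
        by_cases h3 : ({u} : Finset V) ∈ U <;> by_cases h4 : ({v} : Finset V) ∈ U
        · exact absurd (Iff.intro (fun _ => h4) (fun _ => h3)) hsepr
        · simp [h3, h4]
        · simp [h3, h4]
        · exact absurd (Iff.intro (fun h => absurd h h3) (fun h => absurd h h4)) hsepr
      have h2 : (if ({u} : Finset V) ∈ U then (1:ℤ) else 0)
          - (if ({v} : Finset V) ∈ U then 1 else 0)
          = ∑ A ∈ F.filter (fun A => A ≠ Finset.univ),
            (if (A ∈ U) ↔ (Pa A ∈ U) then 0 else if A ∈ U then dP u v A else - dP u v A) := by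
        rw [← hLcomp, hid]
      rw [h2] at h1
      rw [← h1]
      exact habs
    -- cast to ℤ
    have hcast : (∑ u : V, ∑ v : V,
        if ({u} : Finset V) ∈ U ∧ ({v} : Finset V) ∉ U then R u v + R v u else 0)
        = ((∑ u : V, ∑ v : V, (if ({u} : Finset V) ∈ U ∧ ({v} : Finset V) ∉ U then
            ((Rn u v : ℤ) + (Rn v u : ℤ)) else 0) : ℤ) : ℝ) := by
      rw [Int.cast_sum]
      refine Finset.sum_congr rfl fun u _ => ?_
      rw [Int.cast_sum]
      refine Finset.sum_congr rfl fun v _ => ?_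
      split_ifs
      · push_cast; rfl
      · simp
    rw [hcast, capT_eq_cast (F := F) (Pa := Pa) G U, Int.cast_le]
    -- pure ℤ chain
    have hsplit : (∑ u : V, ∑ v : V, (if ({u} : Finset V) ∈ U ∧ ({v} : Finset V) ∉ U then
          ((Rn u v : ℤ) + (Rn v u : ℤ)) else 0))
        = (∑ u : V, ∑ v : V, (Rn u v : ℤ) *
            ((if ({u} : Finset V) ∈ U ∧ ({v} : Finset V) ∉ U then (1:ℤ) else 0)
              + (if ({v} : Finset V) ∈ U ∧ ({u} : Finset V) ∉ U then (1:ℤ) else 0))) := by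
      have e1 : (∑ u : V, ∑ v : V, (if ({u} : Finset V) ∈ U ∧ ({v} : Finset V) ∉ U then
            ((Rn u v : ℤ) + (Rn v u : ℤ)) else 0))
          = (∑ u : V, ∑ v : V, (if ({u} : Finset V) ∈ U ∧ ({v} : Finset V) ∉ U then
              (Rn u v : ℤ) else 0))
            + (∑ u : V, ∑ v : V, (if ({u} : Finset V) ∈ U ∧ ({v} : Finset V) ∉ U then
              (Rn v u : ℤ) else 0)) := by
        rw [← Finset.sum_add_distrib]
        simp_rw [← Finset.sum_add_distrib]
        refine Finset.sum_congr rfl fun u _ => Finset.sum_congr rfl fun v _ => ?_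
        split_ifs <;> simp
      have e2 : (∑ u : V, ∑ v : V, (if ({u} : Finset V) ∈ U ∧ ({v} : Finset V) ∉ U then
            (Rn v u : ℤ) else 0))
          = ∑ u : V, ∑ v : V, (if ({v} : Finset V) ∈ U ∧ ({u} : Finset V) ∉ U then
            (Rn u v : ℤ) else 0) := by
        rw [Finset.sum_comm]
      rw [e1, e2, ← Finset.sum_add_distrib]
      simp_rw [← Finset.sum_add_distrib]
      refine Finset.sum_congr rfl fun u _ => Finset.sum_congr rfl fun v _ => ?_
      split_ifs <;> ring
    rw [hsplit]
    have hpoint : ∀ u v : V, (Rn u v : ℤ) *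
        ((if ({u} : Finset V) ∈ U ∧ ({v} : Finset V) ∉ U then (1:ℤ) else 0)
          + (if ({v} : Finset V) ∈ U ∧ ({u} : Finset V) ∉ U then (1:ℤ) else 0))
        ≤ (Rn u v : ℤ) * ∑ A ∈ F.filter (fun A => A ≠ Finset.univ),
            (if (A ∈ U) ↔ (Pa A ∈ U) then 0 else |dP u v A|) := by
      intro u v
      have hsum0 : (0:ℤ) ≤ ∑ A ∈ F.filter (fun A => A ≠ Finset.univ),
          (if (A ∈ U) ↔ (Pa A ∈ U) then 0 else |dP u v A|) :=
        Finset.sum_nonneg fun A _ => by split_ifs; exacts [le_refl 0, abs_nonneg _]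
      by_cases hc1 : ({u} : Finset V) ∈ U ∧ ({v} : Finset V) ∉ U
      · have hc2 : ¬ (({v} : Finset V) ∈ U ∧ ({u} : Finset V) ∉ U) := fun h => h.2 hc1.1
        rw [if_pos hc1, if_neg hc2, add_zero, mul_one]
        have := hpair u v (fun h => hc1.2 (h.1 hc1.1))
        calc (Rn u v : ℤ) = (Rn u v : ℤ) * 1 := by ring
          _ ≤ _ := mul_le_mul_of_nonneg_left this (Int.ofNat_nonneg _)
      · by_cases hc2 : ({v} : Finset V) ∈ U ∧ ({u} : Finset V) ∉ U
        · rw [if_neg hc1, if_pos hc2, zero_add, mul_one]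
          have := hpair u v (fun h => hc2.2 (h.2 hc2.1))
          calc (Rn u v : ℤ) = (Rn u v : ℤ) * 1 := by ring
            _ ≤ _ := mul_le_mul_of_nonneg_left this (Int.ofNat_nonneg _)
        · rw [if_neg hc1, if_neg hc2, add_zero, mul_zero]
          exact mul_nonneg (Int.ofNat_nonneg _) hsum0
    refine le_trans (Finset.sum_le_sum fun u _ => Finset.sum_le_sum fun v _ => hpoint u v) ?_
    have hswap : (∑ u : V, ∑ v : V, (Rn u v : ℤ) *
        ∑ A ∈ F.filter (fun A => A ≠ Finset.univ),
          (if (A ∈ U) ↔ (Pa A ∈ U) then 0 else |dP u v A|))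
        = ∑ A ∈ F.filter (fun A => A ≠ Finset.univ),
            (if (A ∈ U) ↔ (Pa A ∈ U) then 0
              else ∑ u : V, ∑ v : V, (Rn u v : ℤ) * |dP u v A|) := by
      have e3 : ∀ u v : V, (Rn u v : ℤ) *
          (∑ A ∈ F.filter (fun A => A ≠ Finset.univ),
            (if (A ∈ U) ↔ (Pa A ∈ U) then 0 else |dP u v A|))
          = ∑ A ∈ F.filter (fun A => A ≠ Finset.univ),
            (if (A ∈ U) ↔ (Pa A ∈ U) then 0 else (Rn u v : ℤ) * |dP u v A|) := by
        intro u v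
        rw [Finset.mul_sum]
        refine Finset.sum_congr rfl fun A _ => ?_
        split_ifs
        · exact mul_zero _
        · rfl
      simp_rw [e3]
      have e4 : (∑ u : V, ∑ v : V, ∑ A ∈ F.filter (fun A => A ≠ Finset.univ),
          (if (A ∈ U) ↔ (Pa A ∈ U) then 0 else (Rn u v : ℤ) * |dP u v A|))
          = ∑ A ∈ F.filter (fun A => A ≠ Finset.univ), ∑ u : V, ∑ v : V,
            (if (A ∈ U) ↔ (Pa A ∈ U) then 0 else (Rn u v : ℤ) * |dP u v A|) := by
        rw [Finset.sum_congr rfl fun (u : V) (_ : u ∈ Finset.univ) =>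
          (Finset.sum_comm (s := Finset.univ)
            (t := F.filter (fun A => A ≠ Finset.univ))
            (f := fun (v : V) (A : Finset V) =>
              (if (A ∈ U) ↔ (Pa A ∈ U) then 0 else (Rn u v : ℤ) * |dP u v A|)))]
        exact Finset.sum_comm
      rw [e4]
      refine Finset.sum_congr rfl fun A _ => ?_
      by_cases hcr : (A ∈ U) ↔ (Pa A ∈ U)
      · simp [hcr]
      · simp only [hcr, if_false]
    rw [hswap]
    refine Finset.sum_le_sum fun A hA => ?_
    obtain ⟨hAF, hAne⟩ := Finset.mem_filter.1 hA
    split_ifs with hcr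
    · exact le_refl 0
    · exact le_trans (hsep A hAF hAne) (hInv.2.1 A hAF hAne)
  -- apply the hypothesis
  have hconc := hresp R hR0 hprem S hSne hSuniv
  have hTeq : (∑ u ∈ S, ∑ v ∈ Sᶜ, (R u v + R v u))
      = ((∑ u : V, ∑ v : V, (Rn u v : ℤ)) : ℝ) := by
    have e1 : (∑ u ∈ S, ∑ v ∈ Sᶜ, (R u v + R v u)) = ∑ u ∈ S, ∑ v ∈ Sᶜ, R u v := by
      refine Finset.sum_congr rfl fun u hu => Finset.sum_congr rfl fun v hv => ?_
      have h0 : Rn v u = 0 := by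
        by_contra h
        exact (Finset.mem_compl.1 hv) (hsupp v u h).1
      simp [hRdef, h0]
    have e2 : (∑ u ∈ S, ∑ v ∈ Sᶜ, R u v) = ∑ u : V, ∑ v : V, R u v := by
      rw [Finset.sum_subset (Finset.subset_univ S)]
      · refine Finset.sum_congr rfl fun u _ => ?_
        refine Finset.sum_subset (Finset.subset_univ Sᶜ) ?_
        intro v _ hv
        have h0 : Rn u v = 0 := by
          by_contra h
          exact (hsupp u v h).2 (by simpa using hv)
        simp [hRdef, h0]
      · intro u _ hu
        refine Finset.sum_eq_zero fun v _ => ?_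
        have h0 : Rn u v = 0 := by
          by_contra h
          exact hu (hsupp u v h).1
        simp [hRdef, h0]
    rw [e1, e2]
    push_cast
    rfl
  have hTge : mincutT G F Pa S ≤ (∑ u ∈ S, ∑ v ∈ Sᶜ, (R u v + R v u)) := by
    rw [hTeq]
    have heq2 : (∑ u : V, ∑ v : V, ((Rn u v : ℤ) : ℝ)) = ((∑ w ∈ S, g {w} : ℤ) : ℝ) := by
      rw [← htot]
      push_cast
      rfl
    rw [heq2]
    exact hval
  calc mincutT G F Pa S = α * ((1/α) * mincutT G F Pa S) := by field_simp
    _ ≤ α * ((1/α) * (∑ u ∈ S, ∑ v ∈ Sᶜ, (R u v + R v u))) := by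
        refine mul_le_mul_of_nonneg_left (mul_le_mul_of_nonneg_left hTge ?_) (le_of_lt hα0)
        positivity
    _ ≤ α * capG G S Sᶜ := mul_le_mul_of_nonneg_left (hresp R hR0 hprem S hSne hSuniv)
        (le_of_lt hα0)
end

section
/- Let G = (V,E) be a finite simple undirected graph and let T be a hierarchical-decomposition tree of G given by a laminar family 𝓕 (with edge weights w({S, P(S)}) = cap_G(S, V∖S)). Then for every nonempty proper subset S ⊆ V, cap_G(S, V∖S) ≤ mincut_T(S, V∖S). -/
open Finset

open Classical in
lemma capG_eq_card {V : Type} [Fintype V] [DecidableEq V] (G : SimpleGraph V) (A : Finset V) :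
    capG G A Aᶜ = (((A ×ˢ Aᶜ)).filter (fun p => G.Adj p.1 p.2)).card := by
  rw [capG, ← Finset.sum_product', Finset.sum_boole]

open Classical in
lemma reach {V : Type} [Fintype V] [DecidableEq V]
    (F : Finset (Finset V)) (Pa : Finset V → Finset V)
    (hlam : ∀ A ∈ F, ∀ B ∈ F, A ⊆ B ∨ B ⊆ A ∨ Disjoint A B)
    (hPa : ∀ S ∈ F, S ≠ Finset.univ →
      Pa S ∈ F ∧ S ⊂ Pa S ∧ ∀ R ∈ F, S ⊂ R → Pa S ⊆ R)
    (U : Finset (Finset V)) (u v : V) (L : Finset V) (hLF : L ∈ F)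
    (huL : u ∈ L) (hvL : v ∈ L)
    (hmin : ∀ B ∈ F, u ∈ B → v ∈ B → L ⊆ B)
    (H : ∀ A ∈ F, A ≠ Finset.univ → u ∈ A → v ∉ A → ((A ∈ U) ↔ (Pa A ∈ U))) :
    ∀ A ∈ F, u ∈ A → v ∉ A → ((A ∈ U) ↔ (L ∈ U)) := by
  suffices h : ∀ n, ∀ A ∈ F, u ∈ A → v ∉ A → (L \ A).card = n → ((A ∈ U) ↔ (L ∈ U)) by
    intro A hA h1 h2; exact h _ A hA h1 h2 rfl
  intro n
  induction n using Nat.strong_induction_on with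
  | _ n ih =>
    intro A hA huA hvA hcard
    have hAL : A ⊆ L := by
      rcases hlam A hA L hLF with h | h | h
      · exact h
      · exact absurd (h hvL) hvA
      · exact absurd huL (Finset.disjoint_left.mp h huA)
    have hssub : A ⊂ L := ssubset_of_subset_of_ne hAL (fun h => hvA (h ▸ hvL))
    have hAuniv : A ≠ Finset.univ := by
      intro h
      exact absurd (h ▸ Finset.subset_univ L) (by simpa [h] using hssub.not_subset)
    obtain ⟨hPaF, hPass, hPamin⟩ := hPa A hA hAuniv
    have hPaL : Pa A ⊆ L := hPamin L hLF hssub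
    have hH := H A hA hAuniv huA hvA
    by_cases hvP : v ∈ Pa A
    · have hLP : L ⊆ Pa A := hmin _ hPaF (hPass.subset huA) hvP
      rw [hH, Finset.Subset.antisymm hPaL hLP]
    · have hlt : (L \ Pa A).card < n := by
        rw [← hcard]
        apply Finset.card_lt_card
        constructor
        · exact Finset.sdiff_subset_sdiff (le_refl L) hPass.subset
        · intro hsub
          obtain ⟨x, hxP, hxA⟩ := Finset.exists_of_ssubset hPass
          have : x ∈ L \ A := Finset.mem_sdiff.mpr ⟨hPaL hxP, hxA⟩
          exact (Finset.mem_sdiff.mp (hsub this)).2 hxP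
      exact hH.trans (ih _ hlt (Pa A) hPaF (hPass.subset huA) hvP rfl)

open Classical in
lemma exists_crossing {V : Type} [Fintype V] [DecidableEq V]
    (F : Finset (Finset V)) (Pa : Finset V → Finset V)
    (hlam : ∀ A ∈ F, ∀ B ∈ F, A ⊆ B ∨ B ⊆ A ∨ Disjoint A B)
    (huniv : Finset.univ ∈ F)
    (hsing : ∀ v : V, ({v} : Finset V) ∈ F)
    (hPa : ∀ S ∈ F, S ≠ Finset.univ →
      Pa S ∈ F ∧ S ⊂ Pa S ∧ ∀ R ∈ F, S ⊂ R → Pa S ⊆ R)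
    (U : Finset (Finset V)) {u v : V} (huv : u ≠ v)
    (hu : ({u} : Finset V) ∈ U) (hv : ({v} : Finset V) ∉ U) :
    ∃ A ∈ F, A ≠ Finset.univ ∧ ¬((A ∈ U) ↔ (Pa A ∈ U)) ∧ ¬((u ∈ A) ↔ (v ∈ A)) := by
  by_contra hcon
  push_neg at hcon
  have hTne : (F.filter (fun B => u ∈ B ∧ v ∈ B)).Nonempty :=
    ⟨Finset.univ, by simp [huniv]⟩
  obtain ⟨L, hLmem, hLmin⟩ := Finset.exists_min_image _ (fun B => B.card) hTne
  simp only [Finset.mem_filter] at hLmem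
  obtain ⟨hLF, huL, hvL⟩ := hLmem
  have hmin : ∀ B ∈ F, u ∈ B → v ∈ B → L ⊆ B := by
    intro B hBF huB hvB
    have hcard := hLmin B (by simp [Finset.mem_filter, hBF, huB, hvB])
    rcases hlam L hLF B hBF with h | h | h
    · exact h
    · exact (Finset.eq_of_subset_of_card_le h hcard).ge
    · exact absurd huB (Finset.disjoint_left.mp h huL)
  have H : ∀ A ∈ F, A ≠ Finset.univ → u ∈ A → v ∉ A → ((A ∈ U) ↔ (Pa A ∈ U)) := by
    intro A hA hne' h1 h2
    by_contra hc
    exact h2 ((hcon A hA hne' (by tauto)).mp h1)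
  have H' : ∀ A ∈ F, A ≠ Finset.univ → v ∈ A → u ∉ A → ((A ∈ U) ↔ (Pa A ∈ U)) := by
    intro A hA hne' h1 h2
    by_contra hc
    exact h2 ((hcon A hA hne' (by tauto)).mpr h1)
  have h1 := reach F Pa hlam hPa U u v L hLF huL hvL hmin H {u} (hsing u)
    (Finset.mem_singleton_self u) (by simp [Ne.symm huv])
  have h2 := reach F Pa hlam hPa U v u L hLF hvL huL (fun B hB ha hb => hmin B hB hb ha) H'
    {v} (hsing v) (Finset.mem_singleton_self v) (by simp [huv])
  exact hv (h2.mpr (h1.mp hu))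

/-- For every hierarchical-decomposition tree `T` of `G` (given by a laminar
family `F` with parent function `Pa`, with edge weights `capG G S Sᶜ`) and every
nonempty proper `S ⊆ V`, `capG G S Sᶜ ≤ mincutT G F Pa S`. -/
theorem capG_le_mincut_of_hierarchical_decomposition
    {V : Type} [Fintype V] [DecidableEq V] (G : SimpleGraph V)
    (F : Finset (Finset V)) (Pa : Finset V → Finset V)
    (hne : ∀ A ∈ F, A.Nonempty)
    (hlam : ∀ A ∈ F, ∀ B ∈ F, A ⊆ B ∨ B ⊆ A ∨ Disjoint A B)
    (huniv : Finset.univ ∈ F)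
    (hsing : ∀ v : V, ({v} : Finset V) ∈ F)
    (hPa : ∀ S ∈ F, S ≠ Finset.univ →
      Pa S ∈ F ∧ S ⊂ Pa S ∧ ∀ R ∈ F, S ⊂ R → Pa S ⊆ R) :
    ∀ S : Finset V, S.Nonempty → S ≠ Finset.univ →
      capG G S Sᶜ ≤ mincutT G F Pa S := by
  classical
  intro S hSne hSuniv
  apply le_csInf
  · refine ⟨capT G F Pa (S.image (fun v => ({v} : Finset V))), S.image (fun v => ({v} : Finset V)), ?_, ?_, ?_, rfl⟩
    · intro x hx
      obtain ⟨w, _, rfl⟩ := Finset.mem_image.mp hx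
      exact hsing w
    · intro w hw; exact Finset.mem_image_of_mem _ hw
    · intro w hw hc
      obtain ⟨z, hz, hzw⟩ := Finset.mem_image.mp hc
      exact hw (Finset.singleton_injective hzw ▸ hz)
  · rintro x ⟨U, hUF, hUS, hUSc, rfl⟩
    set P : Finset V → Finset (V × V) := fun A => (A ×ˢ Aᶜ).filter (fun p => G.Adj p.1 p.2) with hPdef
    set Cr : Finset (Finset V) := (F.filter (fun A => A ≠ Finset.univ)).filter
        (fun A => ¬((A ∈ U) ↔ (Pa A ∈ U))) with hCrdef
    have hcapT : capT G F Pa U = ∑ A ∈ Cr, capG G A Aᶜ := by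
      rw [capT, hCrdef]
      conv_rhs => rw [Finset.sum_filter]
      apply Finset.sum_congr rfl
      intro A hA
      by_cases h : (A ∈ U) ↔ (Pa A ∈ U) <;> simp [h]
    have hex : ∀ p ∈ P S, ∃ A, A ∈ Cr ∧ ¬((p.1 ∈ A) ↔ (p.2 ∈ A)) := by
      intro p hp
      simp only [hPdef, Finset.mem_filter, Finset.mem_product, Finset.mem_compl] at hp
      obtain ⟨⟨h1, h2⟩, hadj⟩ := hp
      obtain ⟨A, hAF, hAuniv, hcross, hxor⟩ :=
        exists_crossing F Pa hlam huniv hsing hPa U (G.ne_of_adj hadj) (hUS _ h1) (hUSc _ h2)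
      exact ⟨A, by simp [hCrdef, Finset.mem_filter, hAF, hAuniv, hcross], hxor⟩
    have hcard : (P S).card ≤ ∑ A ∈ Cr, (P A).card := by
      rw [← Finset.card_sigma]
      classical
      set ch : V × V → Finset V := fun p =>
        if h : ∃ A, A ∈ Cr ∧ ¬((p.1 ∈ A) ↔ (p.2 ∈ A)) then h.choose else ∅ with hchdef
      have hch : ∀ p ∈ P S, ch p ∈ Cr ∧ ¬((p.1 ∈ ch p) ↔ (p.2 ∈ ch p)) := by
        intro p hp
        have h := hex p hp
        simp only [hchdef, dif_pos h]
        exact h.choose_spec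
      apply Finset.card_le_card_of_injOn
        (fun p => (⟨ch p, if p.1 ∈ ch p then p else p.swap⟩ : Σ _ : Finset V, V × V))
      · intro p hp
        obtain ⟨hCr', hxor⟩ := hch p hp
        simp only [hPdef, Finset.mem_coe, Finset.mem_filter, Finset.mem_product, Finset.mem_compl] at hp
        obtain ⟨⟨h1, h2⟩, hadj⟩ := hp
        rw [Finset.mem_coe, Finset.mem_sigma]
        refine ⟨hCr', ?_⟩
        dsimp only
        by_cases h : p.1 ∈ ch p
        · rw [if_pos h]
          simp only [hPdef, Finset.mem_filter, Finset.mem_product, Finset.mem_compl]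
          exact ⟨⟨h, fun hc => hxor ⟨fun _ => hc, fun _ => h⟩⟩, hadj⟩
        · rw [if_neg h]
          have h2' : p.2 ∈ ch p := by
            by_contra hc
            exact hxor ⟨fun hh => absurd hh h, fun hh => absurd hh hc⟩
          simp only [hPdef, Finset.mem_filter, Finset.mem_product, Finset.mem_compl]
          exact ⟨⟨h2', h⟩, hadj.symm⟩
      · intro p hp q hq hfq
        have hps : p.1 ∈ S ∧ p.2 ∉ S := by
          simp only [hPdef, Finset.mem_coe, Finset.mem_filter, Finset.mem_product,
            Finset.mem_compl] at hp
          exact ⟨hp.1.1, hp.1.2⟩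
        have hqs : q.1 ∈ S ∧ q.2 ∉ S := by
          simp only [hPdef, Finset.mem_coe, Finset.mem_filter, Finset.mem_product,
            Finset.mem_compl] at hq
          exact ⟨hq.1.1, hq.1.2⟩
        obtain ⟨hfst, hsnd⟩ := Sigma.mk.inj_iff.mp hfq
        have hsnd' := eq_of_heq hsnd
        by_cases hp1 : p.1 ∈ ch p <;> by_cases hq1 : q.1 ∈ ch q <;>
          simp only [if_pos, if_neg, hp1, hq1, if_true, if_false, ite_true, ite_false] at hsnd'
        · exact hsnd'
        · have h12 : p.1 = q.2 := by simp [hsnd']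
          exact absurd (h12 ▸ hps.1) hqs.2
        · have h12 : q.1 = p.2 := by simp [← hsnd']
          exact absurd (h12 ▸ hqs.1) hps.2
        · exact Prod.swap_injective hsnd'
    have hPS : capG G S Sᶜ = ((P S).card : ℝ) := capG_eq_card G S
    rw [hPS, hcapT]
    calc ((P S).card : ℝ) ≤ ((∑ A ∈ Cr, (P A).card : ℕ) : ℝ) := by exact_mod_cast hcard
      _ = ∑ A ∈ Cr, capG G A Aᶜ := by
          rw [Nat.cast_sum]
          exact Finset.sum_congr rfl fun A _ => (capG_eq_card G A).symm
end

section
/- Let V be a finite vertex set, K a finite commodity set, P : V×K → ℝ a demand state, and Q : V×V → ℝ≥0 a demand matrix. Define the updated demand state P^{↑Q} by P^{↑Q}(u,k) = P(u,k) − (P(u,k)/‖P(u)‖₁)·Σ_{v∈V} Q(u,v) + Σ_{v∈V} (P(v,k)/‖P(v)‖₁)·Q(v,u), where any term whose denominator ‖P(w)‖₁ equals 0 is interpreted as 0 (note that then P(w,k) = 0 as well). Then: (1) P − P^{↑Q} is a valid demand state, i.e., Σ_{u∈V} (P(u,k) − P^{↑Q}(u,k)) = 0 for every k∈K; and (2)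 for every cut (S, S̄) of V, dem_{P − P^{↑Q}}(S, S̄) ≤ dem_Q(S, S̄). -/
open Finset

/- `load P v` is the `ℓ₁` norm `‖P(v)‖₁` of the demand vector of `v`. -/
noncomputable def load {V K : Type} [Fintype K] (P : V → K → ℝ) (v : V) : ℝ :=
  ∑ k : K, |P v k|

/- `updateState P Q` is the updated demand state `P^{↑Q}`; note that in Lean
division by zero yields `0`, matching the convention that terms with
`‖P(w)‖₁ = 0` are interpreted as `0`. -/
noncomputable def updateState {V K : Type} [Fintype V] [Fintype K]
    (P : V → K → ℝ) (Q : V → V → ℝ) : V → K → ℝ :=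
  fun u k =>
    P u k - (P u k / load P u) * (∑ v : V, Q u v) +
      ∑ v : V, (P v k / load P v) * Q v u

lemma abs_frac_sum_le_one {V K : Type} [Fintype K] (P : V → K → ℝ) (u : V) :
    ∑ k : K, |P u k / load P u| ≤ 1 := by
  have h0 : 0 ≤ load P u := Finset.sum_nonneg fun k _ => abs_nonneg _
  rcases eq_or_lt_of_le h0 with h | h
  · simp only [← h, div_zero, abs_zero, Finset.sum_const_zero]; norm_num
  · have : ∑ k : K, |P u k / load P u| = (∑ k : K, |P u k|) / load P u := by
      rw [Finset.sum_div]
      refine Finset.sum_congr rfl fun k _ => ?_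
      rw [abs_div, abs_of_pos h]
    rw [this]
    rw [show (∑ k : K, |P u k|) = load P u from rfl, div_self h.ne']

/-- `P − P^{↑Q}` is a valid demand state, and its demand across any cut is at
most the demand of `Q` across that cut. -/
theorem update_demand_state_valid_and_dominated
    {V K : Type} [Fintype V] [DecidableEq V] [Fintype K]
    (P : V → K → ℝ) (Q : V → V → ℝ) (hQ : ∀ u v, 0 ≤ Q u v) :
    (∀ k : K, ∑ u : V, (P u k - updateState P Q u k) = 0) ∧
    ∀ S : Finset V, S.Nonempty → S ≠ Finset.univ →
      (∑ k : K, |∑ u ∈ S, (P u k - updateState P Q u k)|) ≤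
        ∑ u ∈ S, ∑ v ∈ Sᶜ, (Q u v + Q v u) := by
  set f : V → K → ℝ := fun u k => P u k / load P u with hf
  have key : ∀ u k, P u k - updateState P Q u k =
      ∑ v : V, (f u k * Q u v - f v k * Q v u) := by
    intro u k
    simp only [updateState, Finset.mul_sum, Finset.sum_sub_distrib]
    ring
  constructor
  · intro k
    simp only [key, Finset.sum_sub_distrib]
    rw [Finset.sum_comm (f := fun u v => f v k * Q v u)]
    ring
  · intro S _ _
    have cut : ∀ k, ∑ u ∈ S, (P u k - updateState P Q u k) =
        ∑ u ∈ S, ∑ v ∈ Sᶜ, (f u k * Q u v - f v k * Q v u) := by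
      intro k
      simp only [key]
      have split : ∀ u, ∑ v : V, (f u k * Q u v - f v k * Q v u) =
          (∑ v ∈ S, (f u k * Q u v - f v k * Q v u)) +
          ∑ v ∈ Sᶜ, (f u k * Q u v - f v k * Q v u) :=
        fun u => (Finset.sum_add_sum_compl S _).symm
      rw [Finset.sum_congr rfl fun u _ => split u, Finset.sum_add_distrib]
      have : ∑ u ∈ S, ∑ v ∈ S, (f u k * Q u v - f v k * Q v u) = 0 := by
        simp only [Finset.sum_sub_distrib]
        rw [Finset.sum_comm (f := fun u v => f v k * Q v u)]
        ring
      rw [this, zero_add]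
    calc ∑ k : K, |∑ u ∈ S, (P u k - updateState P Q u k)|
        ≤ ∑ k : K, ∑ u ∈ S, ∑ v ∈ Sᶜ, (|f u k| * Q u v + |f v k| * Q v u) := by
          refine Finset.sum_le_sum fun k _ => ?_
          rw [cut k]
          refine (Finset.abs_sum_le_sum_abs _ _).trans ?_
          refine Finset.sum_le_sum fun u _ => ?_
          refine (Finset.abs_sum_le_sum_abs _ _).trans ?_
          refine Finset.sum_le_sum fun v _ => ?_
          calc |f u k * Q u v - f v k * Q v u|
              ≤ |f u k * Q u v| + |f v k * Q v u| := abs_sub _ _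
            _ = |f u k| * Q u v + |f v k| * Q v u := by
                rw [abs_mul, abs_mul, abs_of_nonneg (hQ u v), abs_of_nonneg (hQ v u)]
      _ ≤ ∑ u ∈ S, ∑ v ∈ Sᶜ, (Q u v + Q v u) := by
          rw [Finset.sum_comm]
          refine Finset.sum_le_sum fun u _ => ?_
          rw [Finset.sum_comm]
          refine Finset.sum_le_sum fun v _ => ?_
          rw [Finset.sum_add_distrib, ← Finset.sum_mul, ← Finset.sum_mul]
          have h1 := abs_frac_sum_le_one P u
          have h2 := abs_frac_sum_le_one P v
          nlinarith [hQ u v, hQ v u]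
end

section
/- Let G = (V,E) be a finite simple undirected graph with |V| = n. Let F ⊆ E induce a balanced clustering, let A ⊆ F be arbitrary, and let C ⊆ E be a set of edges that separates A from F∖A, in the sense that no connected component of the graph (V, E∖C) contains both an endpoint of some edge in A∖C and an endpoint of some edge in (F∖A)∖C. Then either A∪C induces a balanced clustering or (F∖A)∪C induces a balanced clustering. -/
/- `balanced G D` : deleting the edges of `D` from `G` leaves every connected
component with at most `(2/3)·|V|` vertices. -/
noncomputable def balanced {V : Type} [Fintype V] (G : SimpleGraph V)
    (D : Set (Sym2 V)) : Prop :=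
  ∀ v : V, (({u : V | (G.deleteEdges D).Reachable v u}.ncard : ℝ)) ≤
    (2 / 3) * (Fintype.card V : ℝ)

private lemma aux_reach {V : Type} (G : SimpleGraph V) (C D E : Set (Sym2 V)) (hCD : C ⊆ D)
    (w : V)
    (h : ∀ a b : V, (G.deleteEdges C).Reachable w a → G.Adj a b → s(a,b) ∉ D → s(a,b) ∉ E) :
    ∀ {x u : V}, (G.deleteEdges D).Walk x u → (G.deleteEdges C).Reachable w x →
      (G.deleteEdges (D ∪ E)).Reachable x u := by
  intro x u p
  induction p with
  | nil => intro _; exact SimpleGraph.Reachable.refl _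
  | cons hadj p ih =>
    rename_i a b c
    intro hwx
    rw [SimpleGraph.deleteEdges_adj] at hadj
    have hE : s(a,b) ∉ E := h a b hwx hadj.1 hadj.2
    have hab : (G.deleteEdges (D ∪ E)).Adj a b := by
      rw [SimpleGraph.deleteEdges_adj]
      exact ⟨hadj.1, by simp [hadj.2, hE]⟩
    have habC : (G.deleteEdges C).Adj a b := by
      rw [SimpleGraph.deleteEdges_adj]
      exact ⟨hadj.1, fun hm => hadj.2 (hCD hm)⟩
    exact hab.reachable.trans (ih (hwx.trans habC.reachable))


/-- If `F` induces a balanced clustering, `A ⊆ F`, and `C` separates the edges of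
`A` from those of `F \ A` (no component of `(V, E \ C)` meets an endpoint of an
edge of `A \ C` and an endpoint of an edge of `(F \ A) \ C`), then `A ∪ C` or
`(F \ A) ∪ C` induces a balanced clustering. -/
theorem balanced_of_separator
    {V : Type} [Fintype V] (G : SimpleGraph V)
    (F A C : Set (Sym2 V))
    (hF : F ⊆ G.edgeSet) (hA : A ⊆ F) (hC : C ⊆ G.edgeSet)
    (hbal : balanced G F)
    (hsep : ∀ e₁ ∈ A \ C, ∀ e₂ ∈ (F \ A) \ C, ∀ u v : V,
      u ∈ e₁ → v ∈ e₂ → ¬ (G.deleteEdges C).Reachable u v) :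
    balanced G (A ∪ C) ∨ balanced G ((F \ A) ∪ C) := by
  by_contra hcon
  push_neg at hcon
  obtain ⟨h1, h2⟩ := hcon
  unfold balanced at h1 h2
  push_neg at h1 h2
  obtain ⟨v₁, hv₁⟩ := h1
  obtain ⟨v₂, hv₂⟩ := h2
  set S₁ := {u : V | (G.deleteEdges (A ∪ C)).Reachable v₁ u} with hS₁
  set S₂ := {u : V | (G.deleteEdges ((F \ A) ∪ C)).Reachable v₂ u} with hS₂
  -- S₁ ∩ S₂ nonempty
  have hfin1 : S₁.Finite := Set.toFinite _
  have hfin2 : S₂.Finite := Set.toFinite _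
  have hunion : (S₁ ∪ S₂).ncard ≤ Fintype.card V := by
    have := Set.ncard_le_ncard (Set.subset_univ (S₁ ∪ S₂)) Set.finite_univ
    simpa [Set.ncard_univ, Nat.card_eq_fintype_card] using this
  have hsum : S₁.ncard + S₂.ncard = (S₁ ∪ S₂).ncard + (S₁ ∩ S₂).ncard :=
    (Set.ncard_union_add_ncard_inter S₁ S₂ hfin1 hfin2).symm
  have hinter : (S₁ ∩ S₂).Nonempty := by
    rw [Set.nonempty_iff_ne_empty]
    intro hemp
    have : (S₁ ∩ S₂).ncard = 0 := by rw [hemp]; simp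
    have hle : (S₁.ncard : ℝ) + (S₂.ncard : ℝ) ≤ (Fintype.card V : ℝ) := by
      have : S₁.ncard + S₂.ncard ≤ Fintype.card V := by omega
      exact_mod_cast this
    nlinarith [hv₁, hv₂, Fintype.card V]
  obtain ⟨w, hw1, hw2⟩ := hinter
  -- components from w have the same size
  have hw1' : ∀ u, (G.deleteEdges (A ∪ C)).Reachable w u ↔ u ∈ S₁ :=
    fun u => ⟨fun h => hw1.trans h, fun h => hw1.symm.trans h⟩
  have hw2' : ∀ u, (G.deleteEdges ((F \ A) ∪ C)).Reachable w u ↔ u ∈ S₂ :=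
    fun u => ⟨fun h => hw2.trans h, fun h => hw2.symm.trans h⟩
  have hFsub1 : F ⊆ (A ∪ C) ∪ ((F \ A) \ C) := by
    intro e he
    by_cases heA : e ∈ A
    · exact Or.inl (Or.inl heA)
    · by_cases heC : e ∈ C
      · exact Or.inl (Or.inr heC)
      · exact Or.inr ⟨⟨he, heA⟩, heC⟩
  have hFsub2 : F ⊆ ((F \ A) ∪ C) ∪ (A \ C) := by
    intro e he
    by_cases heA : e ∈ A
    · by_cases heC : e ∈ C
      · exact Or.inl (Or.inr heC)
      · exact Or.inr ⟨heA, heC⟩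
    · exact Or.inl (Or.inl ⟨he, heA⟩)
  -- key: bounded by F-component
  have key : ∀ (D E : Set (Sym2 V)), C ⊆ D → F ⊆ D ∪ E →
      (∀ a b : V, (G.deleteEdges C).Reachable w a → G.Adj a b → s(a,b) ∉ D → s(a,b) ∉ E) →
      ({u : V | (G.deleteEdges D).Reachable w u}.ncard : ℝ) ≤
        (2/3) * (Fintype.card V : ℝ) := by
    intro D E hCD hFDE h
    have hsub : {u : V | (G.deleteEdges D).Reachable w u} ⊆
        {u : V | (G.deleteEdges F).Reachable w u} := by
      intro u hu
      obtain ⟨p⟩ := hu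
      have := aux_reach G C D E hCD w h p (SimpleGraph.Reachable.refl w)
      exact this.mono (SimpleGraph.deleteEdges_anti hFDE)
    calc ({u : V | (G.deleteEdges D).Reachable w u}.ncard : ℝ)
        ≤ ({u : V | (G.deleteEdges F).Reachable w u}.ncard : ℝ) := by
          exact_mod_cast Set.ncard_le_ncard hsub (Set.toFinite _)
      _ ≤ (2/3) * (Fintype.card V : ℝ) := hbal w
  by_cases hex1 : ∃ e ∈ (F \ A) \ C, ∃ a, a ∈ e ∧ (G.deleteEdges C).Reachable w a
  · by_cases hex2 : ∃ e ∈ A \ C, ∃ a, a ∈ e ∧ (G.deleteEdges C).Reachable w a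
    · obtain ⟨e₂, he₂, b, hbe, hwb⟩ := hex1
      obtain ⟨e₁, he₁, a, hae, hwa⟩ := hex2
      exact hsep e₁ he₁ e₂ he₂ a b hae hbe (hwa.symm.trans hwb)
    · -- no endpoint of A\C reachable; use D = (F\A)∪C, E = A\C
      have := key ((F \ A) ∪ C) (A \ C) (Set.subset_union_right) hFsub2 ?_
      · have hsz : {u : V | (G.deleteEdges ((F \ A) ∪ C)).Reachable w u} = S₂ :=
          Set.ext fun u => hw2' u
        rw [hsz] at this
        linarith
      · intro a b hwa hab hD hE
        exact hex2 ⟨s(a,b), hE, a, by simp, hwa⟩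
  · -- no endpoint of (F\A)\C reachable; use D = A∪C, E = (F\A)\C
    have := key (A ∪ C) ((F \ A) \ C) (Set.subset_union_right) hFsub1 ?_
    · have hsz : {u : V | (G.deleteEdges (A ∪ C)).Reachable w u} = S₁ :=
        Set.ext fun u => hw1' u
      rw [hsz] at this
      linarith
    · intro a b hwa hab hD hE
      exact hex1 ⟨s(a,b), hE, a, by simp, hwa⟩
end

section
/- Let G = (V,E) be a finite simple undirected graph, let A, C ⊆ V with A nonempty, and let φ > 0, a ≥ 0, c ≥ 0. Assume that A φ-expands in G (with respect to μ ≡ 1). Assume further that there exists a demand matrix Q : V×V → ℝ≥0 such that Q(u,v) = 0 unless u∈C and v∈A, Σ_{v∈A} Q(u,v) = 1 for every u∈C, Σ_{u∈C} Q(u,v) ≤ a for every v∈A, and dem_Q(S, S̄) ≤ c·cap_G(S, S̄) for every cut (S, S̄) (in the paper this last condition is obtained from a flow from C to A routable in G with congestion c, in which every vertex of C sends 1 unit and every vertex of A receives at most a units). Then A∪C (φ/(2·(a+1+c·φ)))-expands in G. -/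
open Finset

/- `expands G μ A α` : the set `A` `α`-expands with respect to the vertex
weighting `μ` in `G`. -/
def expands {V : Type} [Fintype V] [DecidableEq V] (G : SimpleGraph V)
    (μ : V → ℝ) (A : Finset V) (α : ℝ) : Prop :=
  ∀ S : Finset V, 0 < min (∑ v ∈ A ∩ S, μ v) (∑ v ∈ A \ S, μ v) →
    α ≤ capG G S Sᶜ / min (∑ v ∈ A ∩ S, μ v) (∑ v ∈ A \ S, μ v)

lemma capG_nonneg {V : Type} [Fintype V] (G : SimpleGraph V) (A B : Finset V) :
    0 ≤ capG G A B := by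
  unfold capG
  apply Finset.sum_nonneg
  intro u _
  apply Finset.sum_nonneg
  intro v _
  split_ifs <;> norm_num

/-- If `A` `φ`-expands in `G` (with `μ ≡ 1`) and there is a demand matrix `Q`
from `C` to `A` in which every vertex of `C` sends `1` unit, every vertex of `A`
receives at most `a` units, and whose demand across every cut is at most `c`
times the capacity of the cut, then `A ∪ C` `(φ / (2·(a + 1 + c·φ)))`-expands
in `G`. -/
theorem union_expands_of_expands_and_routing
    {V : Type} [Fintype V] [DecidableEq V] (G : SimpleGraph V)
    (A C : Finset V) (hA : A.Nonempty)
    (φ a c : ℝ) (hφ : 0 < φ) (ha : 0 ≤ a) (hc : 0 ≤ c)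
    (hexp : expands G (fun _ => 1) A φ)
    (Q : V → V → ℝ) (hQ0 : ∀ u v, 0 ≤ Q u v)
    (hsupp : ∀ u v, Q u v ≠ 0 → u ∈ C ∧ v ∈ A)
    (hsend : ∀ u ∈ C, ∑ v ∈ A, Q u v = 1)
    (hrecv : ∀ v ∈ A, ∑ u ∈ C, Q u v ≤ a)
    (hresp : ∀ S : Finset V, S.Nonempty → S ≠ Finset.univ →
      (∑ u ∈ S, ∑ v ∈ Sᶜ, (Q u v + Q v u)) ≤ c * capG G S Sᶜ) :
    expands G (fun _ => 1) (A ∪ C) (φ / (2 * (a + 1 + c * φ))) := by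
  intro S hmin
  set cap : ℝ := capG G S Sᶜ with hcap
  have hcap0 : 0 ≤ cap := capG_nonneg G S Sᶜ
  -- notation for the various sums of ones
  set p : ℝ := ∑ v ∈ (A ∪ C) ∩ S, (fun _ => (1:ℝ)) v with hp
  set q : ℝ := ∑ v ∈ (A ∪ C) \ S, (fun _ => (1:ℝ)) v with hq
  have hp0 : 0 < p := lt_of_lt_of_le hmin (min_le_left _ _)
  have hq0 : 0 < q := lt_of_lt_of_le hmin (min_le_right _ _)
  -- S is nonempty and not univ
  have hSne : S.Nonempty := by
    by_contra h
    rw [Finset.not_nonempty_iff_eq_empty] at h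
    simp [hp, h] at hp0
  have hSnu : S ≠ Finset.univ := by
    intro h
    have he : (A ∪ C) \ S = ∅ := by
      rw [h]
      exact Finset.sdiff_eq_empty_iff_subset.mpr (Finset.subset_univ _)
    simp [hq, he] at hq0
  have hdem : (∑ u ∈ S, ∑ v ∈ Sᶜ, (Q u v + Q v u)) ≤ c * cap := hresp S hSne hSnu
  have hdem1 : (∑ u ∈ S, ∑ v ∈ Sᶜ, Q u v) ≤ c * cap := by
    refine le_trans ?_ hdem
    apply Finset.sum_le_sum
    intro u _
    apply Finset.sum_le_sum
    intro v _
    exact le_add_of_nonneg_right (hQ0 v u)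
  have hdem2 : (∑ u ∈ Sᶜ, ∑ v ∈ S, Q u v) ≤ c * cap := by
    refine le_trans ?_ hdem
    rw [Finset.sum_comm]
    apply Finset.sum_le_sum
    intro u _
    apply Finset.sum_le_sum
    intro v _
    exact le_add_of_nonneg_left (hQ0 u v)
  -- receiving bound on any subset T of A
  have hrecvT : ∀ T : Finset V, T ⊆ A → ∀ U : Finset V, U ⊆ C →
      (∑ u ∈ U, ∑ v ∈ T, Q u v) ≤ a * ∑ v ∈ T, (fun _ => (1:ℝ)) v := by
    intro T hT U hU
    rw [Finset.sum_comm]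
    simp only [Finset.mul_sum, mul_one]
    apply Finset.sum_le_sum
    intro v hv
    calc ∑ u ∈ U, Q u v ≤ ∑ u ∈ C, Q u v := by
          apply Finset.sum_le_sum_of_subset_of_nonneg hU
          intro i _ _; exact hQ0 i v
      _ ≤ a := hrecv v (hT hv)
  -- Claim 1 : |C ∩ S| ≤ a |A ∩ S| + c * cap
  have claim1 : (∑ u ∈ C ∩ S, (fun _ => (1:ℝ)) u)
      ≤ a * (∑ v ∈ A ∩ S, (fun _ => (1:ℝ)) v) + c * cap := by
    have e1 : (∑ u ∈ C ∩ S, (fun _ => (1:ℝ)) u) = ∑ u ∈ C ∩ S, ∑ v ∈ A, Q u v := by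
      apply Finset.sum_congr rfl
      intro u hu
      exact (hsend u (Finset.mem_of_mem_inter_left hu)).symm
    rw [e1]
    have e2 : (∑ u ∈ C ∩ S, ∑ v ∈ A, Q u v)
        = (∑ u ∈ C ∩ S, ∑ v ∈ A ∩ S, Q u v) + ∑ u ∈ C ∩ S, ∑ v ∈ A \ S, Q u v := by
      rw [← Finset.sum_add_distrib]
      apply Finset.sum_congr rfl
      intro u _
      exact (Finset.sum_inter_add_sum_sdiff A S (Q u)).symm
    rw [e2]
    gcongr
    · exact hrecvT _ Finset.inter_subset_left _ Finset.inter_subset_left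
    · refine le_trans ?_ hdem1
      have h1 : (∑ u ∈ C ∩ S, ∑ v ∈ A \ S, Q u v) ≤ ∑ u ∈ S, ∑ v ∈ A \ S, Q u v := by
        apply Finset.sum_le_sum_of_subset_of_nonneg Finset.inter_subset_right
        intro i _ _
        exact Finset.sum_nonneg fun v _ => hQ0 i v
      refine le_trans h1 ?_
      apply Finset.sum_le_sum
      intro u _
      apply Finset.sum_le_sum_of_subset_of_nonneg
      · intro v hv
        simp only [Finset.mem_sdiff] at hv
        simpa using hv.2
      · intro i _ _; exact hQ0 u i
  -- Claim 2 : |C \ S| ≤ a |A \ S| + c * cap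
  have claim2 : (∑ u ∈ C \ S, (fun _ => (1:ℝ)) u)
      ≤ a * (∑ v ∈ A \ S, (fun _ => (1:ℝ)) v) + c * cap := by
    have e1 : (∑ u ∈ C \ S, (fun _ => (1:ℝ)) u) = ∑ u ∈ C \ S, ∑ v ∈ A, Q u v := by
      apply Finset.sum_congr rfl
      intro u hu
      exact (hsend u (Finset.mem_sdiff.mp hu).1).symm
    rw [e1]
    have e2 : (∑ u ∈ C \ S, ∑ v ∈ A, Q u v)
        = (∑ u ∈ C \ S, ∑ v ∈ A ∩ S, Q u v) + ∑ u ∈ C \ S, ∑ v ∈ A \ S, Q u v := by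
      rw [← Finset.sum_add_distrib]
      apply Finset.sum_congr rfl
      intro u _
      exact (Finset.sum_inter_add_sum_sdiff A S (Q u)).symm
    rw [e2, add_comm]
    gcongr
    · exact hrecvT _ Finset.sdiff_subset _ Finset.sdiff_subset
    · refine le_trans ?_ hdem2
      have h1 : (∑ u ∈ C \ S, ∑ v ∈ A ∩ S, Q u v) ≤ ∑ u ∈ Sᶜ, ∑ v ∈ A ∩ S, Q u v := by
        apply Finset.sum_le_sum_of_subset_of_nonneg
        · intro u hu
          simpa using (Finset.mem_sdiff.mp hu).2
        · intro i _ _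
          exact Finset.sum_nonneg fun v _ => hQ0 i v
      refine le_trans h1 ?_
      apply Finset.sum_le_sum
      intro u _
      apply Finset.sum_le_sum_of_subset_of_nonneg Finset.inter_subset_right
      intro i _ _; exact hQ0 u i
  -- expansion of A
  set aS : ℝ := ∑ v ∈ A ∩ S, (fun _ => (1:ℝ)) v with haS
  set aD : ℝ := ∑ v ∈ A \ S, (fun _ => (1:ℝ)) v with haD
  have haS0 : 0 ≤ aS := Finset.sum_nonneg fun _ _ => zero_le_one
  have haD0 : 0 ≤ aD := Finset.sum_nonneg fun _ _ => zero_le_one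
  have hexpA : φ * min aS aD ≤ cap := by
    by_cases h : 0 < min aS aD
    · have := hexp S h
      rw [le_div_iff₀ h] at this
      linarith [this]
    · push_neg at h
      have : min aS aD = 0 := le_antisymm h (le_min haS0 haD0)
      rw [this, mul_zero]
      exact hcap0
  -- union cardinality bounds
  have hone : ∀ s t : Finset V, (∑ v ∈ s ∪ t, (fun _ => (1:ℝ)) v)
      ≤ (∑ v ∈ s, (fun _ => (1:ℝ)) v) + ∑ v ∈ t, (fun _ => (1:ℝ)) v := by
    intro s t
    simp only [Finset.sum_const, nsmul_eq_mul, mul_one]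
    exact_mod_cast Finset.card_union_le s t
  have hpb : p ≤ aS + ∑ u ∈ C ∩ S, (fun _ => (1:ℝ)) u := by
    rw [hp, haS, Finset.union_inter_distrib_right]
    exact hone _ _
  have hqb : q ≤ aD + ∑ u ∈ C \ S, (fun _ => (1:ℝ)) u := by
    rw [hq, haD, Finset.union_sdiff_distrib]
    exact hone _ _
  -- key inequality : φ * min p q ≤ (a + 1 + c*φ) * cap
  have hK : (0:ℝ) < a + 1 + c * φ := by positivity
  have hkey : φ * min p q ≤ (a + 1 + c * φ) * cap := by
    rcases le_total aS aD with hcase | hcase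
    · have hm : min aS aD = aS := min_eq_left hcase
      rw [hm] at hexpA
      have h1 : min p q ≤ (a + 1) * aS + c * cap := by
        calc min p q ≤ p := min_le_left _ _
          _ ≤ aS + ∑ u ∈ C ∩ S, (fun _ => (1:ℝ)) u := hpb
          _ ≤ aS + (a * aS + c * cap) := by linarith [claim1]
          _ = (a + 1) * aS + c * cap := by ring
      nlinarith [hexpA, h1, hcap0, haS0]
    · have hm : min aS aD = aD := min_eq_right hcase
      rw [hm] at hexpA
      have h1 : min p q ≤ (a + 1) * aD + c * cap := by
        calc min p q ≤ q := min_le_right _ _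
          _ ≤ aD + ∑ u ∈ C \ S, (fun _ => (1:ℝ)) u := hqb
          _ ≤ aD + (a * aD + c * cap) := by linarith [claim2]
          _ = (a + 1) * aD + c * cap := by ring
      nlinarith [hexpA, h1, hcap0, haD0]
  -- finish
  rw [le_div_iff₀ hmin, div_mul_eq_mul_div, div_le_iff₀ (by positivity : (0:ℝ) < 2 * (a + 1 + c * φ))]
  nlinarith [hkey, hcap0, hK, hmin]
end

section
/- Let G = (V,E) be a finite simple undirected graph, K a finite commodity set, and P : V×K → ℝ a demand state with Σ_{k∈K} |P(v,k)| ≤ deg_G(v) for every v∈V. Define P₀ : E×K → ℝ by P₀(e,k) = Σ_{v endpoint of e} P(v,k)/deg_G(v) (any term with deg_G(v) = 0 is interpreted as 0; note P(v,k) = 0 in that case). Then for every cut (B, W = V∖B) of V, writing E_B = {e∈E : e has at least one endpoint in B}, it holds that Σ_{k∈K} |Σ_{v∈B} P(v,k)| ≤ Σ_{k∈K} |Σ_{e∈E_B} P₀(e,k)| + cap_G(B,W). -/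
open Finset

/- `spread G P e k` is the demand state `P₀` on the edges of `G` obtained by
spreading the demand `P(v,·)` of each vertex `v` equally over its incident
edges: `P₀(e,k) = Σ_{v endpoint of e} P(v,k) / deg(v)`.  (In Lean, division by
`0` yields `0`, matching the convention for isolated vertices.) -/
open Classical in
noncomputable def spread {V K : Type} [Fintype V] [DecidableEq V] [Fintype K]
    (G : SimpleGraph V) [DecidableRel G.Adj]
    (P : V → K → ℝ) (e : G.edgeSet) (k : K) : ℝ :=
  ∑ v ∈ Finset.univ.filter (fun v : V => v ∈ (e : Sym2 V)),
    P v k / (G.degree v : ℝ)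

open Classical in
lemma aux_card_incident {V : Type} [Fintype V] [DecidableEq V]
    (G : SimpleGraph V) [DecidableRel G.Adj] (B : Finset V) (v : V) :
    (Finset.univ.filter
        (fun e : G.edgeSet => (∃ u ∈ B, u ∈ (e : Sym2 V)) ∧ v ∈ (e : Sym2 V))).card =
      (univ.filter (fun u => G.Adj v u ∧ (v ∈ B ∨ u ∈ B))).card := by
  classical
  symm
  refine Finset.card_bij
    (fun u hu => (⟨s(v,u), G.mem_edgeSet.mpr (Finset.mem_filter.mp hu).2.1⟩ : {x : Sym2 V // x ∈ G.edgeSet}))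
    ?_ ?_ ?_
  · intro u hu
    obtain ⟨-, hadj, hor⟩ := Finset.mem_filter.mp hu
    refine Finset.mem_filter.mpr ⟨Finset.mem_univ _, ?_, Sym2.mem_mk_left v u⟩
    rcases hor with hB | hB
    · exact ⟨v, hB, Sym2.mem_mk_left v u⟩
    · exact ⟨u, hB, Sym2.mem_mk_right v u⟩
  · intro a ha b hb h
    have : s(v, a) = s(v, b) := congrArg Subtype.val h
    exact Sym2.congr_right.mp this
  · intro e he
    obtain ⟨-, hB, hv⟩ := Finset.mem_filter.mp he
    obtain ⟨u, hu⟩ := Sym2.mem_iff_exists.mp hv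
    have hadj : G.Adj v u := G.mem_edgeSet.mp (hu ▸ e.2)
    have hor : v ∈ B ∨ u ∈ B := by
      obtain ⟨w, hwB, hw⟩ := hB
      rw [hu, Sym2.mem_iff] at hw
      rcases hw with rfl | rfl
      · exact Or.inl hwB
      · exact Or.inr hwB
    exact ⟨u, Finset.mem_filter.mpr ⟨Finset.mem_univ _, hadj, hor⟩, Subtype.ext hu.symm⟩

/- Spreading a demand state `P` with `‖P(v)‖₁ ≤ deg(v)` from the vertices onto
the incident edges changes the demand across a cut `(B, W)` by at most
`capG G B W`. -/
open Classical in
theorem spread_demand_across_cut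
    {V K : Type} [Fintype V] [DecidableEq V] [Fintype K]
    (G : SimpleGraph V) [DecidableRel G.Adj]
    (P : V → K → ℝ)
    (hload : ∀ v : V, (∑ k : K, |P v k|) ≤ (G.degree v : ℝ)) :
    ∀ B : Finset V, B.Nonempty → B ≠ Finset.univ →
      (∑ k : K, |∑ v ∈ B, P v k|) ≤
        (∑ k : K, |∑ e ∈ Finset.univ.filter
            (fun e : G.edgeSet => ∃ v ∈ B, v ∈ (e : Sym2 V)),
          spread G P e k|) + capG G B Bᶜ := by
  classical
  intro B _ _
  have hP0 : ∀ v, G.degree v = 0 → ∀ k, P v k = 0 := by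
    intro v hv k
    have h1 : |P v k| ≤ 0 := le_trans
      (Finset.single_le_sum (f := fun k => |P v k|) (fun k _ => abs_nonneg _) (mem_univ k))
      (by simpa [hv] using hload v)
    exact abs_eq_zero.mp (le_antisymm h1 (abs_nonneg _))
  set n : V → ℕ := fun v => (univ.filter (fun u => G.Adj v u ∧ (v ∈ B ∨ u ∈ B))).card with hn
  -- key identity
  have hkey : ∀ k : K,
      (∑ e ∈ Finset.univ.filter (fun e : G.edgeSet => ∃ v ∈ B, v ∈ (e : Sym2 V)),
          spread G P e k)
        = (∑ v ∈ B, P v k) + ∑ v ∈ Bᶜ, (n v : ℝ) * (P v k / (G.degree v : ℝ)) := by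
    intro k
    have step1 :
        (∑ e ∈ Finset.univ.filter (fun e : G.edgeSet => ∃ v ∈ B, v ∈ (e : Sym2 V)),
            spread G P e k)
          = ∑ v : V, (n v : ℝ) * (P v k / (G.degree v : ℝ)) := by
      calc (∑ e ∈ Finset.univ.filter (fun e : G.edgeSet => ∃ v ∈ B, v ∈ (e : Sym2 V)),
              spread G P e k)
          = ∑ e ∈ Finset.univ.filter (fun e : G.edgeSet => ∃ v ∈ B, v ∈ (e : Sym2 V)),
              ∑ v : V, if v ∈ (e : Sym2 V) then P v k / (G.degree v : ℝ) else 0 := by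
            refine Finset.sum_congr rfl fun e _ => ?_
            rw [spread, Finset.sum_filter]
        _ = ∑ v : V, ∑ e ∈ Finset.univ.filter (fun e : G.edgeSet => ∃ v ∈ B, v ∈ (e : Sym2 V)),
              if v ∈ (e : Sym2 V) then P v k / (G.degree v : ℝ) else 0 := Finset.sum_comm
        _ = ∑ v : V, (n v : ℝ) * (P v k / (G.degree v : ℝ)) := by
            refine Finset.sum_congr rfl fun v _ => ?_
            rw [← Finset.sum_filter, Finset.sum_const, Finset.filter_filter, nsmul_eq_mul]
            congr 2
            exact aux_card_incident G B v
    rw [step1, ← Finset.sum_add_sum_compl B]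
    congr 1
    refine Finset.sum_congr rfl fun v hv => ?_
    have hnv : n v = G.degree v := by
      rw [hn]
      have hset : (univ.filter (fun u => G.Adj v u ∧ (v ∈ B ∨ u ∈ B)))
          = G.neighborFinset v := by
        ext u
        simp [SimpleGraph.mem_neighborFinset, hv]
      simp only [hset, SimpleGraph.card_neighborFinset_eq_degree]
    rcases eq_or_ne (G.degree v) 0 with hd | hd
    · simp [hP0 v hd k]
    · have hd' : (G.degree v : ℝ) ≠ 0 := Nat.cast_ne_zero.mpr hd
      rw [hnv, mul_comm, div_mul_cancel₀ _ hd']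
  -- bound on the remainder
  have habs : ∀ v ∈ Bᶜ, (∑ k : K, |(n v : ℝ) * (P v k / (G.degree v : ℝ))|) ≤ (n v : ℝ) := by
    intro v _
    have heq : ∀ k : K, |(n v : ℝ) * (P v k / (G.degree v : ℝ))|
        = (n v : ℝ) * (|P v k| / (G.degree v : ℝ)) := by
      intro k
      rw [abs_mul, abs_div, abs_of_nonneg (by positivity : (0:ℝ) ≤ ((n v : ℕ) : ℝ)),
        abs_of_nonneg (by positivity : (0:ℝ) ≤ ((G.degree v : ℕ) : ℝ))]
    calc (∑ k : K, |(n v : ℝ) * (P v k / (G.degree v : ℝ))|)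
        = ∑ k : K, (n v : ℝ) * (|P v k| / (G.degree v : ℝ)) :=
          Finset.sum_congr rfl fun k _ => heq k
      _ = (n v : ℝ) * ((∑ k : K, |P v k|) / (G.degree v : ℝ)) := by
          rw [← Finset.mul_sum, Finset.sum_div]
      _ ≤ (n v : ℝ) := by
          rcases eq_or_ne (G.degree v) 0 with hd | hd
          · simp [hd]
          · have hd' : (0:ℝ) < (G.degree v : ℝ) :=
              Nat.cast_pos.mpr (Nat.pos_of_ne_zero hd)
            have h1 : (∑ k : K, |P v k|) / (G.degree v : ℝ) ≤ 1 :=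
              (div_le_one hd').mpr (hload v)
            calc (n v : ℝ) * ((∑ k : K, |P v k|) / (G.degree v : ℝ))
                ≤ (n v : ℝ) * 1 := mul_le_mul_of_nonneg_left h1 (by positivity)
              _ = (n v : ℝ) := mul_one _
  -- cap identity
  have hcap : (∑ v ∈ Bᶜ, (n v : ℝ)) = capG G B Bᶜ := by
    rw [capG, Finset.sum_comm]
    refine Finset.sum_congr rfl fun w hw => ?_
    have hwB : w ∉ B := by simpa using hw
    have hset : (univ.filter (fun u => G.Adj w u ∧ (w ∈ B ∨ u ∈ B)))
        = B.filter (fun u => G.Adj u w) := by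
      ext u
      simp only [Finset.mem_filter, Finset.mem_univ, true_and, hwB, false_or]
      constructor
      · rintro ⟨h1, h2⟩; exact ⟨h2, h1.symm⟩
      · rintro ⟨h1, h2⟩; exact ⟨h2.symm, h1⟩
    have hnw : n w = (B.filter (fun u => G.Adj u w)).card := by simp only [hn, hset]
    rw [hnw, Finset.card_filter]
    push_cast
    exact Finset.sum_congr rfl fun x _ => by split_ifs <;> rfl
  -- assemble
  have hRcap : (∑ k : K, |∑ v ∈ Bᶜ, (n v : ℝ) * (P v k / (G.degree v : ℝ))|)
      ≤ capG G B Bᶜ := by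
    calc (∑ k : K, |∑ v ∈ Bᶜ, (n v : ℝ) * (P v k / (G.degree v : ℝ))|)
        ≤ ∑ k : K, ∑ v ∈ Bᶜ, |(n v : ℝ) * (P v k / (G.degree v : ℝ))| :=
          Finset.sum_le_sum fun k _ => Finset.abs_sum_le_sum_abs _ _
      _ = ∑ v ∈ Bᶜ, ∑ k : K, |(n v : ℝ) * (P v k / (G.degree v : ℝ))| := Finset.sum_comm
      _ ≤ ∑ v ∈ Bᶜ, (n v : ℝ) := Finset.sum_le_sum habs
      _ = capG G B Bᶜ := hcap
  calc (∑ k : K, |∑ v ∈ B, P v k|)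
      = ∑ k : K, |(∑ e ∈ Finset.univ.filter
            (fun e : G.edgeSet => ∃ v ∈ B, v ∈ (e : Sym2 V)), spread G P e k)
          - ∑ v ∈ Bᶜ, (n v : ℝ) * (P v k / (G.degree v : ℝ))| := by
        refine Finset.sum_congr rfl fun k _ => ?_
        rw [hkey k, add_sub_cancel_right]
    _ ≤ ∑ k : K, (|∑ e ∈ Finset.univ.filter
            (fun e : G.edgeSet => ∃ v ∈ B, v ∈ (e : Sym2 V)), spread G P e k|
          + |∑ v ∈ Bᶜ, (n v : ℝ) * (P v k / (G.degree v : ℝ))|) := by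
        refine Finset.sum_le_sum fun k _ => ?_
        exact abs_sub _ _
    _ = (∑ k : K, |∑ e ∈ Finset.univ.filter
            (fun e : G.edgeSet => ∃ v ∈ B, v ∈ (e : Sym2 V)), spread G P e k|)
        + ∑ k : K, |∑ v ∈ Bᶜ, (n v : ℝ) * (P v k / (G.degree v : ℝ))| :=
          Finset.sum_add_distrib
    _ ≤ _ := add_le_add_right hRcap _
end
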